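/- arXiv:1009.4802 — 10 statements merged into one kernel-verified Lean document; each statement's English description precedes it below -/
import Mathlib

section
/- For every positive integer m, base b ≥ 2, and k with 1 ≤ k ≤ b-1, the number of integers i in {1,...,m} whose last nonzero base-b digit equals b-k is (m - D_m)/(b-1) + Σ_{j≥0} 1[m_j ≥ b-k], where m = Σ_j m_j b^j is the base-b expansion of m and D_m = Σ_j m_j. -/
/-!
An integer `i ≥ 1` has last nonzero digit `d` at position `j` exactly when
`i ≡ d b^j (mod b^(j+1))`, so the count splits over `j` into residue-class counts.
Among `1, …, m` the class of `r ∈ (0, n)` modulo `n` has `⌊m/n⌋ + [r ≤ m mod n]` elements;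
with `n = b^(j+1)`, `r = d b^j` the bracket is `[d ≤ m_j]`, and summing `⌊m/b^(j+1)⌋` over `j`
gives Legendre's `(m - D_m)/(b-1)`.
-/

open Finset

namespace Nat

theorem le_div_pow_mod_iff {b : ℕ} (hb : 0 < b) (m j d : ℕ) :
    d ≤ m / b ^ j % b ↔ d * b ^ j ≤ m % b ^ (j + 1) := by
  rw [← Nat.mod_mul_right_div_self, ← pow_succ, Nat.le_div_iff_mul_le (pow_pos hb j)]

theorem mod_pow_succ_eq_mul_pow_iff {b d : ℕ} (hd : d < b) (i j : ℕ) :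
    i % b ^ (j + 1) = d * b ^ j ↔ b ^ j ∣ i ∧ i / b ^ j % b = d := by
  have hbj : 0 < b ^ j := pow_pos (by omega) j
  have hlt : i % b ^ j < b ^ j := Nat.mod_lt i hbj
  rw [Nat.mod_pow_succ, Nat.dvd_iff_mod_eq_zero]
  constructor
  · intro h
    have hdigit : i / b ^ j % b = d := by
      simpa [Nat.add_mul_div_left _ _ hbj, Nat.div_eq_of_lt hlt, Nat.mul_div_cancel _ hbj]
        using congrArg (· / b ^ j) h
    rw [hdigit, mul_comm] at h
    exact ⟨by omega, hdigit⟩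
  · rintro ⟨hmod, rfl⟩
    rw [hmod, zero_add, mul_comm]

def lastNonzeroDigit (b i : ℕ) : ℕ := i / b ^ padicValNat b i % b

theorem padicValNat_eq_and_lastNonzeroDigit_eq_iff {b d i : ℕ} (hb : 1 < b) (hd0 : d ≠ 0)
    (hdb : d < b) (hi : i ≠ 0) (j : ℕ) :
    padicValNat b i = j ∧ lastNonzeroDigit b i = d ↔ i % b ^ (j + 1) = d * b ^ j := by
  rw [mod_pow_succ_eq_mul_pow_iff hdb]
  constructor
  · rintro ⟨rfl, h⟩
    exact ⟨pow_padicValNat_dvd, h⟩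
  · rintro ⟨hdvd, h⟩
    have hle : j ≤ padicValNat b i := (pow_dvd_iff_le_padicValNat hb.ne' hi).1 hdvd
    have hnot : ¬ b ^ (j + 1) ∣ i := fun hsucc =>
      hd0 (h ▸ Nat.mod_eq_zero_of_dvd (Nat.dvd_div_of_mul_dvd (pow_succ b j ▸ hsucc)))
    rw [pow_dvd_iff_le_padicValNat hb.ne' hi] at hnot
    obtain rfl : padicValNat b i = j := by omega
    exact ⟨rfl, h⟩

theorem card_filter_Icc_mod_eq {n r : ℕ} (hr : 0 < r) (hrn : r < n) (m : ℕ) :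
    #{i ∈ Icc 1 m | i % n = r} = (m + n - r) / n := by
  have hn : 0 < n := by omega
  have himage : {i ∈ Icc 1 m | i % n = r} = (range ((m + n - r) / n)).image (n * · + r) := by
    ext i
    simp only [mem_filter, mem_Icc, mem_image, mem_range, Nat.lt_iff_add_one_le,
      Nat.le_div_iff_mul_le hn, add_mul, one_mul]
    constructor
    · rintro ⟨⟨-, him⟩, hir⟩
      have hi := Nat.div_add_mod i n
      exact ⟨i / n, by rw [mul_comm]; omega, by omega⟩
    · rintro ⟨t, ht, rfl⟩
      rw [mul_comm] at ht
      exact ⟨⟨by omega, by omega⟩, by rw [Nat.mul_add_mod, Nat.mod_eq_of_lt hrn]⟩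
  rw [himage, Finset.card_image_of_injective _ fun s t h => by simpa [hn.ne'] using h, card_range]

theorem add_sub_div_eq {n r : ℕ} (hn : 0 < n) (hrn : r ≤ n) (m : ℕ) :
    (m + n - r) / n = m / n + if r ≤ m % n then 1 else 0 := by
  have hsplit : m + n - r = (m % n + n - r) + n * (m / n) := by
    have := Nat.mod_add_div m n
    omega
  have hlt := Nat.mod_lt m hn
  rw [hsplit, Nat.add_mul_div_left _ _ hn, add_comm]
  congr 1
  split_ifs with h
  · exact Nat.div_eq_of_lt_le (by omega) (by omega)
  · exact Nat.div_eq_of_lt (by omega)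

theorem card_filter_Icc_mod_pow_succ_eq {b d : ℕ} (hd0 : d ≠ 0) (hdb : d < b) (m j : ℕ) :
    #{i ∈ Icc 1 m | i % b ^ (j + 1) = d * b ^ j}
      = m / b ^ (j + 1) + if d ≤ m / b ^ j % b then 1 else 0 := by
  have hbj : 0 < b ^ j := pow_pos (by omega) j
  have hr : d * b ^ j < b ^ (j + 1) := by
    rw [pow_succ, mul_comm]
    exact Nat.mul_lt_mul_of_pos_left hdb hbj
  rw [card_filter_Icc_mod_eq (Nat.mul_pos (by omega) hbj) hr, add_sub_div_eq (by omega) hr.le]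
  simp only [le_div_pow_mod_iff (Nat.zero_lt_of_lt hdb)]

theorem sum_range_div_pow_succ_eq {b : ℕ} (hb : 1 < b) {m N : ℕ} (hN : log b m < N) :
    ∑ j ∈ range N, m / b ^ (j + 1) = (m - (digits b m).sum) / (b - 1) := by
  have htail : ∀ j ≥ log b m + 1, m / b ^ (j + 1) = 0 := fun j hj =>
    Nat.div_eq_of_lt <| (Nat.lt_pow_succ_log_self hb m).trans_le
      (Nat.pow_le_pow_right (by omega) (by omega))
  rw [eventually_constant_sum htail hN, ← sub_one_mul_sum_log_div_pow_eq_sub_sum_digits,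
    Nat.mul_div_cancel_left _ (by omega)]

end Nat

theorem count_last_nonzero_digit_general (b m k : ℕ) (hb : 2 ≤ b)
    (hk1 : 1 ≤ k) (hk2 : k ≤ b - 1) :
    ((Finset.Icc 1 m).filter (fun i => (i / b ^ Nat.maxPowDiv b i) % b = b - k)).card
      = (m - (Nat.digits b m).sum) / (b - 1)
        + ((Finset.range (m + 1)).filter (fun j => b - k ≤ m / b ^ j % b)).card := by
  have hd0 : b - k ≠ 0 := by omega
  have hdb : b - k < b := by omega
  change #{i ∈ Icc 1 m | Nat.lastNonzeroDigit b i = b - k} = _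
  calc #{i ∈ Icc 1 m | Nat.lastNonzeroDigit b i = b - k}
      = ∑ j ∈ range (m + 1), #{i ∈ Icc 1 m | i % b ^ (j + 1) = (b - k) * b ^ j} := by
        rw [card_eq_sum_card_fiberwise (f := padicValNat b) (t := range (m + 1))]
        · refine sum_congr rfl fun j _ => congrArg card (Finset.ext fun i => ?_)
          simp only [mem_filter, mem_Icc, and_assoc]
          refine and_congr_right fun hi => and_congr_right fun _ => ?_
          rw [and_comm, Nat.padicValNat_eq_and_lastNonzeroDigit_eq_iff hb hd0 hdb (by omega)]
        · exact fun i hi => mem_range.2 <| Nat.lt_succ_of_le <|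
            (Nat.padicValNat_le_self i).trans (mem_Icc.1 (mem_filter.1 hi).1).2
    _ = ∑ j ∈ range (m + 1), (m / b ^ (j + 1) + if b - k ≤ m / b ^ j % b then 1 else 0) :=
        sum_congr rfl fun j _ => Nat.card_filter_Icc_mod_pow_succ_eq hd0 hdb m j
    _ = _ := by
        rw [sum_add_distrib,
          Nat.sum_range_div_pow_succ_eq hb (Nat.lt_succ_of_le (Nat.log_le_self b m)), card_filter]

/-- For `t ≥ 1` and base `b ≥ 2`, the last nonzero base-`b` digit of `t` is
`(t / b ^ Nat.maxPowDiv b t) % b`, since `Nat.maxPowDiv b t` is the number of trailing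
zeros of `t` in base `b`.  The digit `m_j` of `m` is `m / b^j % b`, and
`D_m = (Nat.digits b m).sum`.  The number of `i ∈ {1,…,m}` whose last nonzero base-`b`
digit equals `b - k` is `(m - D_m)/(b-1) + Σ_j 1[m_j ≥ b-k]` (the sum over `j` being
finite since all digits beyond position `m` vanish). -/
theorem count_last_nonzero_digit (b m k : ℕ) (hb : 2 ≤ b) (hm : 1 ≤ m)
    (hk1 : 1 ≤ k) (hk2 : k ≤ b - 1) :
    ((Finset.Icc 1 m).filter (fun i => (i / b ^ Nat.maxPowDiv b i) % b = b - k)).card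
      = (m - (Nat.digits b m).sum) / (b - 1)
        + ((Finset.range (m + 1)).filter (fun j => b - k ≤ m / b ^ j % b)).card :=
  count_last_nonzero_digit_general b m k hb hk1 hk2
end

section
/- Suppose f : ℕ → ℕ satisfies f(n) ~ a n^α as n → ∞ with a > 0 and 0 < α < 1. Define s_1 = 1 and s_{m+1} = s_m + f(s_1 + ... + s_m). Then s_m ~ d m^γ as m → ∞, where γ = (1+α)/(1-α) and d = (a(1-α)^{1+α} / (2^α (1+α)))^{1/(1-α)}. -/
/-!
With `X_m = s_1 + ⋯ + s_m` the recursion is a discretisation of `s' = a X^α`, `X' = s`.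
Its energy identity `(s²)' = L (X^{1+α})'`, `L = 2a/(1+α)`, gives `s ~ √L X^{(1+α)/2}`, and then
`(X^{(1-α)/2})' → (1-α)/2 · √L`. Discretely, comparing the increments of `s_m²` and `X_m^{1+α}`
first gives `s_m² ≍ X_m^{1+α}`, hence `f(X_m)/s_m → 0` and `s_{m+1}/X_m → 0`; with these,
Stolz–Cesàro turns both identities into limits, and
`s_m / m^γ = (s_m / X_m^{(1+α)/2}) · (X_m^{(1-α)/2} / m)^γ`.
-/

open Filter Real Topology

theorem tendsto_one_add_rpow_sub_one_div (p : ℝ) :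
    Tendsto (fun t : ℝ => ((1 + t) ^ p - 1) / t) (𝓝[≠] 0) (𝓝 p) := by
  have hderiv : HasDerivAt (fun t : ℝ => (1 + t) ^ p) p 0 := by
    simpa using
      (hasDerivAt_rpow_const (p := p) (x := 1 + 0) (.inl (by norm_num))).comp_const_add 1 0
  refine (hasDerivAt_iff_tendsto_slope.1 hderiv).congr fun t => ?_
  simp [slope_def_field]

theorem tendsto_rpow_add_sub_rpow_div {ι : Type*} {l : Filter ι} (p : ℝ) {u v : ι → ℝ}
    (hu : ∀ᶠ i in l, 0 < u i) (hv : ∀ᶠ i in l, 0 < v i)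
    (h : Tendsto (fun i => v i / u i) l (𝓝 0)) :
    Tendsto (fun i => ((u i + v i) ^ p - u i ^ p) / (u i ^ (p - 1) * v i)) l (𝓝 p) := by
  have ht : Tendsto (fun i => v i / u i) l (𝓝[≠] 0) :=
    tendsto_nhdsWithin_iff.2
      ⟨h, by filter_upwards [hu, hv] with i hu hv using (div_pos hv hu).ne'⟩
  refine ((tendsto_one_add_rpow_sub_one_div p).comp ht).congr' ?_
  filter_upwards [hu, hv] with i hu hv
  have hsplit : u i + v i = u i * (1 + v i / u i) := by field_simp
  rw [Function.comp_apply, hsplit, mul_rpow hu.le (by positivity), rpow_sub_one hu.ne']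
  field_simp

theorem rpow_add_sub_rpow_mem_Icc {p u v : ℝ} (hp : 1 ≤ p) (hu : 0 < u) (hv : 0 ≤ v) :
    (u + v) ^ p - u ^ p ∈ Set.Icc (p * u ^ (p - 1) * v) (p * (u + v) ^ (p - 1) * v) := by
  have hw : 0 < u + v := by positivity
  constructor
  · have := one_add_mul_self_le_rpow_one_add (s := v / u) (by linarith [div_nonneg hv hu.le]) hp
    have hsplit : u + v = u * (1 + v / u) := by field_simp
    rw [hsplit, mul_rpow hu.le (by positivity), rpow_sub_one hu.ne']
    have hup : 0 < u ^ p := by positivity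
    calc p * (u ^ p / u) * v = u ^ p * (1 + p * (v / u)) - u ^ p := by field_simp; ring
      _ ≤ _ := by gcongr
  · have hbern := one_add_mul_self_le_rpow_one_add (s := -(v / (u + v)))
      (by rw [neg_le_neg_iff, div_le_one hw]; linarith) hp
    have hratio : 1 + -(v / (u + v)) = u / (u + v) := by field_simp; ring
    rw [hratio, div_rpow hu.le hw.le, le_div_iff₀ (by positivity)] at hbern
    rw [rpow_sub_one hw.ne']
    calc (u + v) ^ p - u ^ p ≤ (u + v) ^ p - (1 + p * -(v / (u + v))) * (u + v) ^ p := by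
          linarith
      _ = p * ((u + v) ^ p / (u + v)) * v := by field_simp; ring

theorem eventually_le_mul_of_sub_le_mul_sub {x y : ℕ → ℝ} {c c' : ℝ}
    (hy : Tendsto y atTop atTop) (hc : c < c')
    (h : ∀ᶠ m in atTop, x (m + 1) - x m ≤ c * (y (m + 1) - y m)) :
    ∀ᶠ m in atTop, x m ≤ c' * y m := by
  obtain ⟨N, hN⟩ := eventually_atTop.1 h
  have htelescope : ∀ m ≥ N, x m - x N ≤ c * (y m - y N) := by
    intro m hm
    induction m, hm using Nat.le_induction with
    | base => simp
    | succ m hm ih => linarith [hN m hm]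
  filter_upwards [eventually_ge_atTop N,
    hy.eventually_ge_atTop ((x N - c * y N) / (c' - c))] with m hm hym
  have := htelescope m hm
  have := (div_le_iff₀ (sub_pos.2 hc)).1 hym
  nlinarith

theorem eventually_mul_le_of_mul_sub_le_sub {x y : ℕ → ℝ} {c c' : ℝ}
    (hy : Tendsto y atTop atTop) (hc : c' < c)
    (h : ∀ᶠ m in atTop, c * (y (m + 1) - y m) ≤ x (m + 1) - x m) :
    ∀ᶠ m in atTop, c' * y m ≤ x m := by
  have := eventually_le_mul_of_sub_le_mul_sub (x := -x) hy (neg_lt_neg hc)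
    (h.mono fun m hm => by simp only [Pi.neg_apply]; linarith)
  exact this.mono fun m hm => by simp only [Pi.neg_apply] at hm; linarith

theorem tendsto_div_of_tendsto_sub_div_sub {x y : ℕ → ℝ} {l : ℝ}
    (hmono : ∀ᶠ m in atTop, y m < y (m + 1)) (hy : Tendsto y atTop atTop)
    (h : Tendsto (fun m => (x (m + 1) - x m) / (y (m + 1) - y m)) atTop (𝓝 l)) :
    Tendsto (fun m => x m / y m) atTop (𝓝 l) := by
  refine tendsto_order.2 ⟨fun u hu => ?_, fun u hu => ?_⟩
  · obtain ⟨v, huv, hvl⟩ := exists_between hu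
    obtain ⟨w, huw, hwv⟩ := exists_between huv
    have hlow : ∀ᶠ m in atTop, v * (y (m + 1) - y m) ≤ x (m + 1) - x m := by
      filter_upwards [h.eventually (lt_mem_nhds hvl), hmono] with m hm hym
      exact (le_div_iff₀ (sub_pos.2 hym)).1 hm.le
    filter_upwards [eventually_mul_le_of_mul_sub_le_sub hy hwv hlow,
      hy.eventually_gt_atTop 0] with m hm hym
    exact huw.trans_le ((le_div_iff₀ hym).2 hm)
  · obtain ⟨v, hlv, hvu⟩ := exists_between hu
    obtain ⟨w, hvw, hwu⟩ := exists_between hvu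
    have hup : ∀ᶠ m in atTop, x (m + 1) - x m ≤ v * (y (m + 1) - y m) := by
      filter_upwards [h.eventually (gt_mem_nhds hlv), hmono] with m hm hym
      exact (div_le_iff₀ (sub_pos.2 hym)).1 hm.le
    filter_upwards [eventually_le_mul_of_sub_le_mul_sub hy hvw hup,
      hy.eventually_gt_atTop 0] with m hm hym
    exact ((div_le_iff₀ hym).2 hm).trans_lt hwu

theorem sq_sqrt_mul_rpow_half {c y : ℝ} (hc : 0 ≤ c) (hy : 0 ≤ y) (p : ℝ) :
    (√c * y ^ (p / 2)) ^ 2 = c * y ^ p := by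
  rw [mul_pow, sq_sqrt hc, ← rpow_natCast, ← rpow_mul hy]
  norm_num

theorem sqrt_mul_mul_sqrt_rpow {a α : ℝ} (ha : 0 < a) (hα₀ : -1 < α) (hα₁ : α < 1) :
    √(2 * a / (1 + α)) * ((1 - α) / 2 * √(2 * a / (1 + α))) ^ ((1 + α) / (1 - α)) =
      (a * (1 - α) ^ (1 + α) / (2 ^ α * (1 + α))) ^ (1 / (1 - α)) := by
  have hp : 0 < 1 + α := by linarith
  have hq : 0 < 1 - α := by linarith
  set L := 2 * a / (1 + α) with hL
  have hL0 : 0 < L := by positivity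
  have hK : 0 < (1 - α) / 2 * √L := by positivity
  refine log_injOn_pos (Set.mem_Ioi.2 (by positivity)) (Set.mem_Ioi.2 (by positivity)) ?_
  rw [log_mul (by positivity) (by positivity), log_rpow hK, log_rpow (by positivity),
    log_mul (by positivity) (by positivity), log_sqrt hL0.le, hL,
    log_div (by positivity) hp.ne', log_mul two_ne_zero ha.ne', log_div hq.ne' two_ne_zero,
    log_div (by positivity) (by positivity), log_mul ha.ne' (by positivity),
    log_mul (by positivity) hp.ne', log_rpow hq, log_rpow two_pos]
  field_simp
  ring

/-- `x m`, `X m` and `φ m` stand for `s_m`, `s_1 + ⋯ + s_m` and `f (s_1 + ⋯ + s_m)`. -/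
structure SumRecursion (a α : ℝ) (x X φ : ℕ → ℝ) : Prop where
  coeff_pos : 0 < a
  exponent_pos : 0 < α
  exponent_lt_one : α < 1
  nonneg : ∀ m, 0 ≤ x m
  sum_nonneg : ∀ m, 0 ≤ X m
  sum_succ : ∀ m, X (m + 1) = X m + x (m + 1)
  tendsto_sum : Tendsto X atTop atTop
  eventually_succ : ∀ᶠ m in atTop, x (m + 1) = x m + φ m
  tendsto_div_rpow : Tendsto (fun m => φ m / X m ^ α) atTop (𝓝 a)

namespace SumRecursion

variable {a α : ℝ} {x X φ : ℕ → ℝ}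

theorem tendsto_rpow_neg (h : SumRecursion a α x X φ) {q : ℝ} (hq : 0 < q) :
    Tendsto (fun m => X m ^ (-q)) atTop (𝓝 0) :=
  (tendsto_rpow_neg_atTop hq).comp h.tendsto_sum

theorem eventually_increment_mem_Icc (h : SumRecursion a α x X φ) :
    ∀ᶠ m in atTop, φ m ∈ Set.Icc (a / 2 * X m ^ α) (2 * a * X m ^ α) := by
  have ha := h.coeff_pos
  have hmem : Set.Ioo (a / 2) (2 * a) ∈ 𝓝 a := Ioo_mem_nhds (half_lt_self ha) (by linarith)
  filter_upwards [h.tendsto_div_rpow.eventually hmem, h.tendsto_sum.eventually_gt_atTop 0]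
    with m hm hX
  have hXα : 0 < X m ^ α := by positivity
  rw [lt_div_iff₀ hXα, div_lt_iff₀ hXα] at hm
  exact ⟨hm.1.le, hm.2.le⟩

theorem le_sum_succ (h : SumRecursion a α x X φ) (m : ℕ) : x (m + 1) ≤ X (m + 1) := by
  linarith [h.sum_succ m, h.sum_nonneg m]

theorem eventually_succ_pos (h : SumRecursion a α x X φ) : ∀ᶠ m in atTop, 0 < x (m + 1) := by
  filter_upwards [h.eventually_succ, h.eventually_increment_mem_Icc,
    h.tendsto_sum.eventually_gt_atTop 0] with m hsucc hφ hX
  have : 0 < a / 2 * X m ^ α := by have := h.coeff_pos; positivity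
  linarith [h.nonneg m, hφ.1]

theorem eventually_sum_succ_le (h : SumRecursion a α x X φ) :
    ∀ᶠ m in atTop, X (m + 1) ≤ (2 + 2 * a) * X m := by
  filter_upwards [h.eventually_succ, h.eventually_increment_mem_Icc,
    h.tendsto_sum.eventually_ge_atTop 1, eventually_ge_atTop 1] with m hsucc hφ hX hm
  obtain ⟨k, rfl⟩ := Nat.exists_eq_add_of_le' hm
  have hXα : X (k + 1) ^ α ≤ X (k + 1) := by
    simpa using rpow_le_rpow_of_exponent_le hX h.exponent_lt_one.le
  nlinarith [h.sum_succ (k + 1), h.le_sum_succ k, hφ.2, h.coeff_pos]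

theorem eventually_sq_sub_sq_mem_Icc (h : SumRecursion a α x X φ) :
    ∀ᶠ m in atTop,
      x (m + 1) ^ 2 - x m ^ 2 ∈ Set.Icc (φ m * x (m + 1)) (2 * φ m * x (m + 1)) := by
  filter_upwards [h.eventually_succ, h.eventually_increment_mem_Icc,
    h.tendsto_sum.eventually_gt_atTop 0] with m hsucc hφ hX
  have hφ0 : 0 ≤ φ m := le_trans (by have := h.coeff_pos; positivity) hφ.1
  have hx := h.nonneg m
  rw [hsucc]
  constructor <;> nlinarith [mul_nonneg hφ0 hx]

theorem eventually_sum_rpow_sub_mem_Icc (h : SumRecursion a α x X φ) :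
    ∀ᶠ m in atTop, X (m + 1) ^ (1 + α) - X m ^ (1 + α) ∈
      Set.Icc ((1 + α) * X m ^ α * x (m + 1)) ((1 + α) * X (m + 1) ^ α * x (m + 1)) := by
  filter_upwards [h.tendsto_sum.eventually_gt_atTop 0] with m hX
  have := rpow_add_sub_rpow_mem_Icc (p := 1 + α) (by linarith [h.exponent_pos]) hX
    (h.nonneg (m + 1))
  rwa [add_sub_cancel_left, ← h.sum_succ] at this

theorem tendsto_sum_rpow (h : SumRecursion a α x X φ) :
    Tendsto (fun m => X m ^ (1 + α)) atTop atTop :=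
  (tendsto_rpow_atTop (by linarith [h.exponent_pos])).comp h.tendsto_sum

theorem exists_sq_le (h : SumRecursion a α x X φ) :
    ∃ C > 0, ∀ᶠ m in atTop, x m ^ 2 ≤ C * X m ^ (1 + α) := by
  have hα : 0 < 1 + α := by linarith [h.exponent_pos]
  refine ⟨4 * a / (1 + α) + 1, by have := h.coeff_pos; positivity,
    eventually_le_mul_of_sub_le_mul_sub h.tendsto_sum_rpow (lt_add_one _) ?_⟩
  filter_upwards [h.eventually_sq_sub_sq_mem_Icc, h.eventually_sum_rpow_sub_mem_Icc,
    h.eventually_increment_mem_Icc] with m hsq hrpow hφ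
  have hx := h.nonneg (m + 1)
  calc x (m + 1) ^ 2 - x m ^ 2 ≤ 2 * (2 * a * X m ^ α) * x (m + 1) := by
        nlinarith [hsq.2, hφ.2]
    _ = 4 * a / (1 + α) * ((1 + α) * X m ^ α * x (m + 1)) := by field_simp; ring
    _ ≤ 4 * a / (1 + α) * (X (m + 1) ^ (1 + α) - X m ^ (1 + α)) := by
        gcongr
        · have := h.coeff_pos; positivity
        · exact hrpow.1

theorem exists_le_sq (h : SumRecursion a α x X φ) :
    ∃ c > 0, ∀ᶠ m in atTop, c * X m ^ (1 + α) ≤ x m ^ 2 := by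
  have hα : 0 < 1 + α := by linarith [h.exponent_pos]
  have ha := h.coeff_pos
  set K := (2 + 2 * a) ^ α
  have hK : 0 < K := by positivity
  set c := a / (2 * K * (1 + α)) with hc_def
  have hc : 0 < c := by positivity
  refine ⟨c / 2, half_pos hc, eventually_mul_le_of_mul_sub_le_sub h.tendsto_sum_rpow
    (half_lt_self hc) ?_⟩
  filter_upwards [h.eventually_sq_sub_sq_mem_Icc, h.eventually_sum_rpow_sub_mem_Icc,
    h.eventually_increment_mem_Icc, h.eventually_sum_succ_le,
    h.tendsto_sum.eventually_gt_atTop 0] with m hsq hrpow hφ hsucc hX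
  have hx := h.nonneg (m + 1)
  have hsuccα : X (m + 1) ^ α ≤ K * X m ^ α := by
    rw [← mul_rpow (by positivity) hX.le]
    exact rpow_le_rpow (h.sum_nonneg _) hsucc h.exponent_pos.le
  calc c * (X (m + 1) ^ (1 + α) - X m ^ (1 + α))
      ≤ c * ((1 + α) * (K * X m ^ α) * x (m + 1)) := by
        gcongr
        exact hrpow.2.trans (by gcongr)
    _ = a / 2 * X m ^ α * x (m + 1) := by rw [hc_def]; field_simp
    _ ≤ x (m + 1) ^ 2 - x m ^ 2 := by nlinarith [hsq.1, hφ.1]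

theorem exists_le_mul_rpow (h : SumRecursion a α x X φ) :
    ∃ C, ∀ᶠ m in atTop, x m ≤ C * X m ^ ((1 + α) / 2) := by
  obtain ⟨C, hC, hle⟩ := h.exists_sq_le
  refine ⟨√C, hle.mono fun m hm => ?_⟩
  rwa [← pow_le_pow_iff_left₀ (h.nonneg m) (by have := h.sum_nonneg m; positivity) two_ne_zero,
    sq_sqrt_mul_rpow_half hC.le (h.sum_nonneg m)]

theorem exists_mul_rpow_le (h : SumRecursion a α x X φ) :
    ∃ c > 0, ∀ᶠ m in atTop, c * X m ^ ((1 + α) / 2) ≤ x m := by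
  obtain ⟨c, hc, hle⟩ := h.exists_le_sq
  refine ⟨√c, sqrt_pos.2 hc, hle.mono fun m hm => ?_⟩
  rwa [← pow_le_pow_iff_left₀ (by have := h.sum_nonneg m; positivity) (h.nonneg m) two_ne_zero,
    sq_sqrt_mul_rpow_half hc.le (h.sum_nonneg m)]

theorem tendsto_increment_div (h : SumRecursion a α x X φ) :
    Tendsto (fun m => φ m / x m) atTop (𝓝 0) := by
  obtain ⟨c, hc, hlow⟩ := h.exists_mul_rpow_le
  have hbound := (h.tendsto_rpow_neg (q := (1 - α) / 2)
    (by linarith [h.exponent_lt_one])).const_mul (2 * a / c)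
  rw [mul_zero] at hbound
  refine squeeze_zero' ?_ ?_ hbound
  · filter_upwards [h.eventually_increment_mem_Icc, h.tendsto_sum.eventually_gt_atTop 0]
      with m hφ hX
    exact div_nonneg (le_trans (by have := h.coeff_pos; positivity) hφ.1) (h.nonneg m)
  · filter_upwards [h.eventually_increment_mem_Icc, hlow, h.tendsto_sum.eventually_gt_atTop 0]
      with m hφ hx hX
    calc φ m / x m ≤ 2 * a * X m ^ α / (c * X m ^ ((1 + α) / 2)) :=
          div_le_div₀ (by have := h.coeff_pos; positivity) hφ.2 (by positivity) hx
      _ = 2 * a / c * X m ^ (-((1 - α) / 2)) := by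
          rw [show -((1 - α) / 2) = α - (1 + α) / 2 by ring, rpow_sub hX]
          field_simp

theorem tendsto_succ_div_sum (h : SumRecursion a α x X φ) :
    Tendsto (fun m => x (m + 1) / X m) atTop (𝓝 0) := by
  obtain ⟨C, hup⟩ := h.exists_le_mul_rpow
  have hbound := ((h.tendsto_rpow_neg (q := (1 - α) / 2)
    (by linarith [h.exponent_lt_one])).const_mul C).add
    ((h.tendsto_rpow_neg (q := 1 - α) (by linarith [h.exponent_lt_one])).const_mul (2 * a))
  rw [mul_zero, mul_zero, add_zero] at hbound
  refine squeeze_zero' (Eventually.of_forall fun m => div_nonneg (h.nonneg _) (h.sum_nonneg _))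
    ?_ hbound
  filter_upwards [h.eventually_succ, h.eventually_increment_mem_Icc, hup,
    h.tendsto_sum.eventually_gt_atTop 0] with m hsucc hφ hx hX
  calc x (m + 1) / X m ≤ (C * X m ^ ((1 + α) / 2) + 2 * a * X m ^ α) / X m := by
        rw [hsucc]; have := hφ.2; gcongr
    _ = C * X m ^ (-((1 - α) / 2)) + 2 * a * X m ^ (-(1 - α)) := by
        rw [show -((1 - α) / 2) = (1 + α) / 2 - 1 by ring, show -(1 - α) = α - 1 by ring,
          rpow_sub_one hX.ne', rpow_sub_one hX.ne']
        ring

theorem eventually_pos (h : SumRecursion a α x X φ) : ∀ᶠ m in atTop, 0 < x m := by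
  obtain ⟨c, hc, hlow⟩ := h.exists_mul_rpow_le
  filter_upwards [hlow, h.tendsto_sum.eventually_gt_atTop 0] with m hm hX
  exact lt_of_lt_of_le (by positivity) hm

theorem tendsto_sq_div_rpow (h : SumRecursion a α x X φ) :
    Tendsto (fun m => x m ^ 2 / X m ^ (1 + α)) atTop (𝓝 (2 * a / (1 + α))) := by
  have hα : 0 < 1 + α := by linarith [h.exponent_pos]
  have hXpos := h.tendsto_sum.eventually_gt_atTop 0
  refine tendsto_div_of_tendsto_sub_div_sub ?_ h.tendsto_sum_rpow ?_
  · filter_upwards [h.eventually_succ_pos, hXpos] with m hx hX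
    exact rpow_lt_rpow hX.le (by rw [h.sum_succ]; linarith) hα
  have hderiv := tendsto_rpow_add_sub_rpow_div (1 + α) hXpos h.eventually_succ_pos
    h.tendsto_succ_div_sum
  have hratio : Tendsto (fun m => (2 + φ m / x m) / (1 + φ m / x m)) atTop (𝓝 2) := by
    convert (h.tendsto_increment_div.const_add 2).div (h.tendsto_increment_div.const_add 1)
      (by norm_num) using 2 <;> norm_num
  have hlim := (h.tendsto_div_rpow.mul hratio).mul (hderiv.inv₀ hα.ne')
  rw [show a * 2 * (1 + α)⁻¹ = 2 * a / (1 + α) by ring] at hlim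
  refine hlim.congr' ?_
  filter_upwards [h.eventually_succ, h.eventually_succ_pos, h.eventually_pos, hXpos]
    with m hsucc hx' hx hX
  have hD : 0 < (X m + x (m + 1)) ^ (1 + α) - X m ^ (1 + α) :=
    sub_pos.2 (rpow_lt_rpow hX.le (by linarith) hα)
  rw [h.sum_succ, add_sub_cancel_left]
  rw [hsucc] at hx' hD ⊢
  field_simp
  ring

theorem tendsto_div_rpow_half (h : SumRecursion a α x X φ) :
    Tendsto (fun m => x m / X m ^ ((1 + α) / 2)) atTop (𝓝 √(2 * a / (1 + α))) := by
  refine ((continuous_sqrt.tendsto _).comp h.tendsto_sq_div_rpow).congr fun m => ?_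
  rw [Function.comp_apply, sqrt_div' _ (rpow_nonneg (h.sum_nonneg m) _), sqrt_sq (h.nonneg m),
    sqrt_eq_rpow, ← rpow_mul (h.sum_nonneg m)]
  ring_nf

theorem tendsto_succ_div_rpow_half (h : SumRecursion a α x X φ) :
    Tendsto (fun m => x (m + 1) / X m ^ ((1 + α) / 2)) atTop (𝓝 √(2 * a / (1 + α))) := by
  have hlim := h.tendsto_div_rpow_half.add (h.tendsto_div_rpow.mul
    (h.tendsto_rpow_neg (q := (1 - α) / 2) (by linarith [h.exponent_lt_one])))
  rw [mul_zero, add_zero] at hlim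
  refine hlim.congr' ?_
  filter_upwards [h.eventually_succ, h.tendsto_sum.eventually_gt_atTop 0] with m hsucc hX
  rw [hsucc, add_div, show -((1 - α) / 2) = α - (1 + α) / 2 by ring, rpow_sub hX]
  field_simp

theorem tendsto_sum_rpow_div_natCast (h : SumRecursion a α x X φ) :
    Tendsto (fun m => X m ^ ((1 - α) / 2) / m) atTop
      (𝓝 ((1 - α) / 2 * √(2 * a / (1 + α)))) := by
  have hXpos := h.tendsto_sum.eventually_gt_atTop 0
  refine tendsto_div_of_tendsto_sub_div_sub (.of_forall fun m => by simp)
    tendsto_natCast_atTop_atTop ?_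
  have hderiv := tendsto_rpow_add_sub_rpow_div ((1 - α) / 2) hXpos h.eventually_succ_pos
    h.tendsto_succ_div_sum
  refine (hderiv.mul h.tendsto_succ_div_rpow_half).congr' ?_
  filter_upwards [h.eventually_succ_pos, hXpos] with m hx hX
  rw [h.sum_succ, Nat.cast_succ, add_sub_cancel_left, div_one,
    show (1 - α) / 2 - 1 = -((1 + α) / 2) by ring, rpow_neg hX.le]
  field_simp

theorem tendsto_div_natCast_rpow (h : SumRecursion a α x X φ) :
    Tendsto (fun m => x m / (m : ℝ) ^ ((1 + α) / (1 - α))) atTop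
      (𝓝 ((a * (1 - α) ^ (1 + α) / (2 ^ α * (1 + α))) ^ (1 / (1 - α)))) := by
  have hq : 0 < 1 - α := by linarith [h.exponent_lt_one]
  rw [← sqrt_mul_mul_sqrt_rpow h.coeff_pos (by linarith [h.exponent_pos]) h.exponent_lt_one]
  refine (h.tendsto_div_rpow_half.mul (h.tendsto_sum_rpow_div_natCast.rpow_const
    (.inr (div_pos (by linarith [h.exponent_pos]) hq).le))).congr' ?_
  filter_upwards [eventually_gt_atTop 0, h.tendsto_sum.eventually_gt_atTop 0] with m hm hX
  have hm' : (0 : ℝ) < m := Nat.cast_pos.2 hm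
  rw [div_rpow (rpow_nonneg hX.le _) hm'.le, ← rpow_mul hX.le,
    show (1 - α) / 2 * ((1 + α) / (1 - α)) = (1 + α) / 2 by field_simp]
  field_simp

end SumRecursion

/-- If `f : ℕ → ℕ` satisfies `f(n) ~ a n^α` with `a > 0`, `0 < α < 1`, and
`s₁ = 1`, `s_{m+1} = s_m + f(s₁ + ⋯ + s_m)`, then `s_m ~ d m^γ` where
`γ = (1+α)/(1-α)` and `d = (a (1-α)^{1+α} / (2^α (1+α)))^{1/(1-α)}`. -/
theorem growth_of_recursive_sequence (f : ℕ → ℕ) (a α : ℝ) (ha : 0 < a)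
    (hα0 : 0 < α) (hα1 : α < 1)
    (hf : Tendsto (fun n : ℕ => (f n : ℝ) / (n : ℝ) ^ α) atTop (nhds a))
    (s : ℕ → ℕ) (hs1 : s 1 = 1)
    (hsrec : ∀ m ≥ 1, s (m + 1) = s m + f (∑ i ∈ Finset.Icc 1 m, s i)) :
    Tendsto (fun m : ℕ => (s m : ℝ) / (m : ℝ) ^ ((1 + α) / (1 - α))) atTop
      (nhds ((a * (1 - α) ^ (1 + α) / (2 ^ α * (1 + α))) ^ (1 / (1 - α)))) := by
  set S : ℕ → ℕ := fun m => ∑ i ∈ Finset.Icc 1 m, s i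
  have hs_pos : ∀ m ≥ 1, 1 ≤ s m := by
    intro m hm
    induction m, hm using Nat.le_induction with
    | base => exact hs1.ge
    | succ m hm ih => rw [hsrec m hm]; omega
  have hS : Tendsto S atTop atTop := by
    refine tendsto_atTop_mono (fun m => ?_) tendsto_id
    simpa using Finset.card_nsmul_le_sum _ _ 1 fun i hi => hs_pos i (Finset.mem_Icc.1 hi).1
  have hrec : SumRecursion a α (fun m => s m) (fun m => S m) (fun m => f (S m)) :=
    { coeff_pos := ha
      exponent_pos := hα0
      exponent_lt_one := hα1
      nonneg := fun m => Nat.cast_nonneg _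
      sum_nonneg := fun m => Nat.cast_nonneg _
      sum_succ := fun m => by simp [S, Finset.sum_Icc_succ_top]
      tendsto_sum := tendsto_natCast_atTop_atTop.comp hS
      eventually_succ := by
        filter_upwards [eventually_ge_atTop 1] with m hm
        simp [hsrec m hm, S]
      tendsto_div_rpow := hf.comp hS }
  exact hrec.tendsto_div_natCast_rpow
end

section
/- If a = (a_1, a_2, ...) and a' = (a'_1, a'_2, ...) are sequences of nonnegative integers such that for every n the partial sum difference Σ_{i=1}^n (a_i - a'_i) lies in {0,1}, then the exploded sequences E(a) and E(a') also satisfy: for every n, the difference of their n-th partial sums lies in {0,1}. -/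
open Classical in
/-- The explosion operator: `explode a` is the binary sequence
`1^{a₀} 0 1^{a₁} 0 1^{a₂} 0 ⋯` (sequences are indexed from 0, so `a i` is the
`(i+1)`-st term `a_{i+1}` of the paper).  Position `n` carries a `1` exactly when it
lies inside the `t`-th block of ones, which occupies positions
`[∑_{i<t}(aᵢ+1), ∑_{i<t}(aᵢ+1) + a_t)`. -/
noncomputable def explode (a : ℕ → ℕ) : ℕ → ℕ := fun n =>
  if ∃ t, (∑ i ∈ Finset.range t, (a i + 1)) ≤ n ∧
      n < (∑ i ∈ Finset.range t, (a i + 1)) + a t then 1 else 0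

private def Bs (a : ℕ → ℕ) (t : ℕ) : ℕ := ∑ i ∈ Finset.range t, (a i + 1)

private lemma Bs_succ (a : ℕ → ℕ) (t : ℕ) : Bs a (t + 1) = Bs a t + (a t + 1) :=
  Finset.sum_range_succ _ _

private lemma Bs_mono (a : ℕ → ℕ) : Monotone (Bs a) := by
  intro s t hst
  exact Finset.sum_le_sum_of_subset (Finset.range_subset_range.mpr hst)

private lemma Bs_strict (a : ℕ → ℕ) : StrictMono (Bs a) := by
  apply strictMono_nat_of_lt_succ
  intro t; rw [Bs_succ]; omega

private lemma Bs_ge (a : ℕ → ℕ) (t : ℕ) : t ≤ Bs a t := by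
  induction t with
  | zero => simp [Bs]
  | succ t ih => rw [Bs_succ]; omega

/-- number of zeros of `explode a` among the first `n` positions -/
noncomputable def Zf (a : ℕ → ℕ) (n : ℕ) : ℕ :=
  Nat.findGreatest (fun t => Bs a t ≤ n) n

private lemma Zf_le (a : ℕ → ℕ) (n : ℕ) : Zf a n ≤ n := Nat.findGreatest_le n

private lemma Zf_spec (a : ℕ → ℕ) (n : ℕ) : Bs a (Zf a n) ≤ n := by
  classical
  have h0 : Bs a 0 = 0 := by simp [Bs]
  exact Nat.findGreatest_spec (P := fun t => Bs a t ≤ n) (Nat.zero_le n)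
    (by show Bs a 0 ≤ n; omega)

private lemma Zf_lt (a : ℕ → ℕ) (n : ℕ) : n < Bs a (Zf a n + 1) := by
  classical
  by_cases h : Zf a n + 1 ≤ n
  · by_contra hc
    exact Nat.findGreatest_is_greatest (Nat.lt_succ_self _) h (le_of_not_gt hc)
  · have h1 : Zf a n = n := le_antisymm (Zf_le a n) (by omega)
    have := Bs_ge a (Zf a n + 1)
    omega

private lemma Zf_eq (a : ℕ → ℕ) {t m : ℕ} (h1 : Bs a t ≤ m) (h2 : m < Bs a (t + 1)) :
    Zf a m = t := by
  rcases lt_trichotomy (Zf a m) t with hlt | he | hgt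
  · have : Bs a (Zf a m + 1) ≤ Bs a t := Bs_mono a (by omega)
    have := Zf_lt a m
    omega
  · exact he
  · have : Bs a (t + 1) ≤ Bs a (Zf a m) := Bs_mono a (by omega)
    have := Zf_spec a m
    omega

private lemma sum_explode (a : ℕ → ℕ) (n : ℕ) :
    (∑ i ∈ Finset.range n, explode a i) + Zf a n = n := by
  classical
  induction n with
  | zero =>
    have : Zf a 0 = 0 := Nat.le_zero.mp (Zf_le a 0)
    simp [this]
  | succ n ih =>
    set z := Zf a n with hz
    have hB1 : Bs a z ≤ n := Zf_spec a n
    have hB2 : n < Bs a (z + 1) := Zf_lt a n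
    rw [Bs_succ] at hB2
    rw [Finset.sum_range_succ]
    by_cases hcase : n < Bs a z + a z
    · -- position n is a one; zero count stays z
      have hone : explode a n = 1 := by
        unfold explode
        exact if_pos ⟨z, hB1, hcase⟩
      have hZ : Zf a (n + 1) = z := by
        apply Zf_eq a (le_trans hB1 (by omega))
        rw [Bs_succ]; omega
      rw [hone, hZ]
      omega
    · -- n = Bs a z + a z, a zero position
      have hn : n = Bs a z + a z := by omega
      have hzero : explode a n = 0 := by
        unfold explode
        apply if_neg
        rintro ⟨t, ht1, ht2⟩
        have hBt1 : Bs a t ≤ n := ht1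
        have hBt2 : n < Bs a t + a t := ht2
        have htz : t = z := by
          rw [hz]
          exact (Zf_eq a hBt1 (by rw [Bs_succ]; omega)).symm
        subst htz
        omega
      have hZ : Zf a (n + 1) = z + 1 := by
        apply Zf_eq a (by rw [Bs_succ]; omega)
        have e1 := Bs_succ a (z + 1)
        have e2 := Bs_succ a z
        omega
      rw [hzero, hZ]
      omega

/-- If the partial-sum differences of two nonnegative integer sequences all lie in
`{0,1}`, then the same holds for their exploded sequences. -/
theorem explode_partial_sum_diff (a a' : ℕ → ℕ)
    (h : ∀ n, ∑ i ∈ Finset.range n, a' i ≤ ∑ i ∈ Finset.range n, a i ∧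
      ∑ i ∈ Finset.range n, a i ≤ (∑ i ∈ Finset.range n, a' i) + 1) :
    ∀ n, ∑ i ∈ Finset.range n, explode a' i ≤ ∑ i ∈ Finset.range n, explode a i ∧
      ∑ i ∈ Finset.range n, explode a i ≤ (∑ i ∈ Finset.range n, explode a' i) + 1 := by
  classical
  -- translate hypothesis to the Bs functions
  have hB : ∀ t, Bs a' t ≤ Bs a t ∧ Bs a t ≤ Bs a' t + 1 := by
    intro t
    have h1 := h t
    have e1 : Bs a t = (∑ i ∈ Finset.range t, a i) + t := by
      simp [Bs, Finset.sum_add_distrib]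
    have e2 : Bs a' t = (∑ i ∈ Finset.range t, a' i) + t := by
      simp [Bs, Finset.sum_add_distrib]
    omega
  intro n
  set z := Zf a n with hz
  set z' := Zf a' n with hz'
  have hs := sum_explode a n
  have hs' := sum_explode a' n
  -- z ≤ z'
  have h1 : z ≤ z' := by
    apply Nat.le_findGreatest (Zf_le a n)
    exact le_trans (hB z).1 (Zf_spec a n)
  -- z' ≤ z + 1
  have h2 : z' ≤ z + 1 := by
    by_contra hc
    push_neg at hc
    have hA : Bs a' z' ≤ n := Zf_spec a' n
    have hlt : n < Bs a (z + 1) := Zf_lt a n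
    have hm1 : Bs a (z + 1) ≤ Bs a (z + 2) - 1 := by
      have := Bs_strict a (show z + 1 < z + 2 by omega); omega
    have hm2 : Bs a (z + 2) ≤ Bs a' (z + 2) + 1 := (hB (z + 2)).2
    have hm3 : Bs a' (z + 2) ≤ Bs a' z' := Bs_mono a' (by omega)
    omega
  omega
end

section
/- The explosion operator is monotone with respect to majorization: if a = (a_1, a_2, ...) and b = (b_1, b_2, ...) are sequences of nonnegative integers with Σ_{i=1}^n a_i ≤ Σ_{i=1}^n b_i for all n, then the exploded binary sequences satisfy Σ_{i=1}^n E(a)_i ≤ Σ_{i=1}^n E(b)_i for all n. -/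
namespace ExplodeAux

/-- Partial sums of `a i + 1`: positions of block boundaries. -/
def S (a : ℕ → ℕ) (t : ℕ) : ℕ := ∑ i ∈ Finset.range t, (a i + 1)

lemma S_succ (a : ℕ → ℕ) (t : ℕ) : S a (t + 1) = S a t + a t + 1 := by
  simp [S, Finset.sum_range_succ]; omega

lemma S_strictMono (a : ℕ → ℕ) : StrictMono (S a) :=
  strictMono_nat_of_lt_succ fun t => by rw [S_succ]; omega

lemma S_ge (a : ℕ → ℕ) (t : ℕ) : t ≤ S a t :=
  (S_strictMono a).le_apply

lemma exists_block (a : ℕ → ℕ) (i : ℕ) : ∃ t, S a t ≤ i ∧ i < S a (t + 1) := by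
  induction i with
  | zero => exact ⟨0, by simp [S], by rw [S_succ]; omega⟩
  | succ i ih =>
    obtain ⟨t, h1, h2⟩ := ih
    rcases lt_or_eq_of_le (Nat.succ_le_of_lt h2) with h' | h'
    · exact ⟨t, by omega, h'⟩
    · exact ⟨t + 1, by omega, by rw [S_succ, ← h']; omega⟩

open Classical in
lemma explode_eq (a : ℕ → ℕ) (i : ℕ) :
    explode a i = if ∃ t, S a (t + 1) = i + 1 then 0 else 1 := by
  obtain ⟨t, h1, h2⟩ := exists_block a i
  rw [S_succ] at h2
  show (if ∃ t, S a t ≤ i ∧ i < S a t + a t then 1 else 0) = _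
  by_cases hc : i < S a t + a t
  · rw [if_pos ⟨t, h1, hc⟩, if_neg]
    rintro ⟨t', ht'⟩
    have hlt : S a t < S a (t' + 1) := by omega
    have hle : S a (t' + 1) ≤ S a (t + 1) := by rw [S_succ a t]; omega
    have e1 : t < t' + 1 := (S_strictMono a).lt_iff_lt.mp hlt
    have e2 : t' + 1 ≤ t + 1 := (S_strictMono a).le_iff_le.mp hle
    have : t' = t := by omega
    subst this
    rw [S_succ] at ht'; omega
  · have hneg : ¬ ∃ t', S a t' ≤ i ∧ i < S a t' + a t' := by
      rintro ⟨t', h1', h2'⟩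
      rcases lt_trichotomy t' t with hl | he | hg
      · have : S a (t' + 1) ≤ S a t := (S_strictMono a).le_iff_le.mpr hl
        rw [S_succ] at this; omega
      · subst he; omega
      · have : S a (t + 1) ≤ S a t' := (S_strictMono a).le_iff_le.mpr hg
        rw [S_succ] at this; omega
    rw [if_neg hneg, if_pos ⟨t, by rw [S_succ a t]; omega⟩]

open Classical in
lemma sum_explode (a : ℕ → ℕ) (n : ℕ) :
    ∑ i ∈ Finset.range n, explode a i
      = n - ((Finset.range n).filter (fun t => S a (t + 1) ≤ n)).card := by
  have key :
      (Finset.range n).filter (fun i => ∃ t, S a (t + 1) = i + 1)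
        = Finset.image (fun t => S a (t + 1) - 1)
            ((Finset.range n).filter (fun t => S a (t + 1) ≤ n)) := by
    ext i
    simp only [Finset.mem_image, Finset.mem_filter, Finset.mem_range]
    constructor
    · rintro ⟨hi, t, ht⟩
      have hge := S_ge a (t + 1)
      exact ⟨t, ⟨by omega, by omega⟩, by omega⟩
    · rintro ⟨t, ⟨htn, hts⟩, rfl⟩
      have hge := S_ge a (t + 1)
      exact ⟨by omega, t, by omega⟩
  have hinj : Set.InjOn (fun t => S a (t + 1) - 1)
      ↑((Finset.range n).filter (fun t => S a (t + 1) ≤ n)) := by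
    intro x _ y _ hxy
    have hx := S_ge a (x + 1)
    have hy := S_ge a (y + 1)
    simp only at hxy
    have : S a (x + 1) = S a (y + 1) := by omega
    have := (S_strictMono a).injective this
    omega
  calc ∑ i ∈ Finset.range n, explode a i
      = ∑ i ∈ Finset.range n,
          (if ∃ t, S a (t + 1) = i + 1 then 0 else 1) := by
        exact Finset.sum_congr rfl fun i _ => explode_eq a i
    _ = ((Finset.range n).filter (fun i => ¬∃ t, S a (t + 1) = i + 1)).card := by
        rw [Finset.card_eq_sum_ones, Finset.sum_filter]
        exact Finset.sum_congr rfl fun i _ => by by_cases hP : ∃ t, S a (t + 1) = i + 1 <;> simp [hP]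
    _ = n - ((Finset.range n).filter (fun i => ∃ t, S a (t + 1) = i + 1)).card := by
        rw [Finset.filter_not, Finset.card_sdiff_of_subset (Finset.filter_subset _ _), Finset.card_range]
    _ = n - ((Finset.range n).filter (fun t => S a (t + 1) ≤ n)).card := by
        rw [key, Finset.card_image_of_injOn hinj]

end ExplodeAux

/-- The explosion operator is monotone for the majorization order: if every partial
sum of `a` is at most the corresponding partial sum of `b`, the same holds after
exploding. -/
theorem explode_monotone_majorization (a b : ℕ → ℕ)
    (h : ∀ n, ∑ i ∈ Finset.range n, a i ≤ ∑ i ∈ Finset.range n, b i) :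
    ∀ n, ∑ i ∈ Finset.range n, explode a i ≤ ∑ i ∈ Finset.range n, explode b i := by
  intro n
  rw [ExplodeAux.sum_explode, ExplodeAux.sum_explode]
  have hS : ∀ t, ExplodeAux.S a t ≤ ExplodeAux.S b t := by
    intro t
    simp only [ExplodeAux.S, Finset.sum_add_distrib]
    have := h t
    omega
  have hsub : (Finset.range n).filter (fun t => ExplodeAux.S b (t + 1) ≤ n)
      ⊆ (Finset.range n).filter (fun t => ExplodeAux.S a (t + 1) ≤ n) := by
    intro t ht
    simp only [Finset.mem_filter] at *
    exact ⟨ht.1, le_trans (hS (t + 1)) ht.2⟩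
  exact Nat.sub_le_sub_left (Finset.card_le_card hsub) n
end

section
/- Let b ≥ 2 and let e be the unique binary sequence with e_1 = 1 satisfying the fixed point equation e = E(b·e), where E is the explosion operator and b·e denotes the coordinatewise scalar multiple. Then e equals the sequence 1 0^{z_1} 1 0^{z_2} 1 0^{z_3} ⋯, where z_t is the number of trailing zeros of t in base b. Equivalently: the position of the (m+1)-st one in e is 1 + m + (m - D_m)/(b-1), where D_m is the base-b digit sum of m. -/
/-- `(m - D_m)/(b-1)`, the sum of the trailing-zero counts `z_1 + ⋯ + z_m`. -/
def qq (b m : ℕ) : ℕ := (m - (Nat.digits b m).sum) / (b - 1)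

/-- position of the `(m+1)`-st one -/
def pp (b m : ℕ) : ℕ := m + qq b m

open Classical in
/-- the claimed explicit sequence -/
noncomputable def gg (b : ℕ) : ℕ → ℕ := fun n => if ∃ m, n = pp b m then 1 else 0

lemma qq_zero (b : ℕ) : qq b 0 = 0 := by simp [qq]

lemma pp_zero (b : ℕ) : pp b 0 = 0 := by simp [pp, qq_zero]

lemma qq_step (b : ℕ) (hb : 2 ≤ b) (m j : ℕ) (hj : j < b) :
    qq b (b * m + j) = m + qq b m := by
  rcases Nat.eq_zero_or_pos (b * m + j) with h0 | h0
  · have hm : m = 0 := by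
      rcases Nat.eq_zero_or_pos m with h | h
      · exact h
      · exfalso; nlinarith
    have hj' : j = 0 := by omega
    simp [hm, hj', qq_zero]
  · have hd : Nat.digits b (b * m + j) = j :: Nat.digits b m := by
      rw [Nat.digits_def' (by omega : 1 < b) h0]
      have hmod : (b * m + j) % b = j := by
        rw [Nat.mul_add_mod]; exact Nat.mod_eq_of_lt hj
      have hdiv : (b * m + j) / b = m := by
        rw [Nat.mul_add_div (by omega : 0 < b), Nat.div_eq_of_lt hj]
        omega
      rw [hmod, hdiv]
    have hDle : (Nat.digits b m).sum ≤ m := Nat.digit_sum_le b m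
    have hbm : b * m = (b - 1) * m + m := by
      have h1 : (b - 1) + 1 = b := by omega
      calc b * m = ((b - 1) + 1) * m := by rw [h1]
        _ = (b - 1) * m + m := by ring
    have key : b * m + j - (Nat.digits b (b * m + j)).sum
        = (b - 1) * m + (m - (Nat.digits b m).sum) := by
      rw [hd]; simp only [List.sum_cons]
      omega
    unfold qq
    rw [key, Nat.mul_add_div (by omega : 0 < b - 1)]

lemma qq_mono_step (b : ℕ) (hb : 2 ≤ b) : ∀ k, qq b k ≤ qq b (k + 1) := by
  intro k
  induction k using Nat.strong_induction_on with
  | _ k ih =>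
    have hk : k = b * (k / b) + k % b := (Nat.div_add_mod k b).symm
    set m := k / b with hm
    set j := k % b with hj
    have hjb : j < b := Nat.mod_lt _ (by omega)
    by_cases hcase : j + 1 < b
    · have h1 : qq b k = m + qq b m := by rw [hk]; exact qq_step b hb m j hjb
      have h2 : qq b (k + 1) = m + qq b m := by
        have h3 : k + 1 = b * m + (j + 1) := by omega
        rw [h3]; exact qq_step b hb m (j+1) hcase
      omega
    · have hjeq : j = b - 1 := by omega
      have h1 : qq b k = m + qq b m := by rw [hk]; exact qq_step b hb m j hjb
      have h2 : qq b (k + 1) = (m + 1) + qq b (m + 1) := by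
        have hbm : b * (m + 1) = b * m + b := by ring
        have h3 : k + 1 = b * (m + 1) + 0 := by omega
        rw [h3]; exact qq_step b hb (m+1) 0 (by omega)
      have h2m : 2 * m ≤ b * m := Nat.mul_le_mul_right m hb
      have hmk : m < k := by omega
      have := ih m hmk
      omega

lemma pp_strictMono (b : ℕ) (hb : 2 ≤ b) : StrictMono (pp b) := by
  apply strictMono_nat_of_lt_succ
  intro n
  have := qq_mono_step b hb n
  unfold pp
  omega

lemma gg_pp (b : ℕ) (m : ℕ) : gg b (pp b m) = 1 := by
  simp only [gg]
  rw [if_pos ⟨m, rfl⟩]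

lemma gg_eq_zero (b : ℕ) (hb : 2 ≤ b) (m n : ℕ) (h1 : pp b m < n) (h2 : n < pp b (m + 1)) :
    gg b n = 0 := by
  simp only [gg]
  rw [if_neg]
  rintro ⟨m', rfl⟩
  have hsm := pp_strictMono b hb
  have hlt : m < m' := by
    by_contra h
    push_neg at h
    exact absurd (hsm.le_iff_le.mpr h) (by omega)
  have := hsm.le_iff_le.mpr (by omega : m + 1 ≤ m')
  omega

/-- the count of ones of `gg b` below `pp b m` is `m` -/
lemma count_gg (b : ℕ) (hb : 2 ≤ b) (m : ℕ) :
    ∑ i ∈ Finset.range (pp b m), gg b i = m := by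
  induction m with
  | zero => simp [pp_zero]
  | succ m ih =>
    have hlt : pp b m < pp b (m + 1) := pp_strictMono b hb (by omega)
    rw [Finset.range_eq_Ico, ← Finset.sum_Ico_consecutive _ (Nat.zero_le (pp b m)) hlt.le]
    rw [← Finset.range_eq_Ico, ih]
    have hico : ∑ i ∈ Finset.Ico (pp b m) (pp b (m+1)), gg b i = 1 := by
      rw [Finset.sum_eq_single (pp b m)]
      · exact gg_pp b m
      · intro i hi hne
        simp only [Finset.mem_Ico] at hi
        exact gg_eq_zero b hb m i (by omega) hi.2
      · intro h
        simp [Finset.mem_Ico, hlt] at h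
    omega

lemma S_gg (b : ℕ) (hb : 2 ≤ b) (m : ℕ) :
    ∑ i ∈ Finset.range (pp b m), (b * gg b i + 1) = pp b m + b * m := by
  rw [Finset.sum_add_distrib, ← Finset.mul_sum, count_gg b hb m]
  simp [Finset.card_range]
  ring

/-- key: positions of ones of `explode (b · gg b)` are exactly the `pp b m`. -/
lemma main_iff (b : ℕ) (hb : 2 ≤ b) (n : ℕ) :
    (∃ t, (∑ i ∈ Finset.range t, (b * gg b i + 1)) ≤ n ∧
      n < (∑ i ∈ Finset.range t, (b * gg b i + 1)) + b * gg b t)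
    ↔ ∃ m, n = pp b m := by
  constructor
  · rintro ⟨t, h1, h2⟩
    have hex : ∃ m, t = pp b m := by
      by_contra hc
      have h0' : gg b t = 0 := by simp only [gg]; rw [if_neg hc]
      rw [h0'] at h2
      omega
    obtain ⟨m, rfl⟩ := hex
    rw [S_gg b hb m] at h1 h2
    rw [gg_pp b m] at h2
    set j := n - (pp b m + b * m) with hjdef
    have hj : j < b := by omega
    refine ⟨b * m + j, ?_⟩
    have hp : pp b (b * m + j) = pp b m + b * m + j := by
      unfold pp
      rw [qq_step b hb m j hj]
      ring
    omega
  · rintro ⟨k, rfl⟩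
    have hk : k = b * (k / b) + k % b := (Nat.div_add_mod k b).symm
    set m := k / b with hm
    set j := k % b with hj
    have hjb : j < b := Nat.mod_lt _ (by omega)
    have hp : pp b k = pp b m + b * m + j := by
      rw [hk]
      unfold pp
      rw [qq_step b hb m j hjb]
      ring
    refine ⟨pp b m, ?_, ?_⟩
    · rw [S_gg b hb m]; omega
    · rw [S_gg b hb m, gg_pp b m]; omega

/-- Let `b ≥ 2` and let `e` be a binary sequence (indexed from 0, so `e 0` is `e_1`)
with `e 0 = 1` satisfying the fixed point equation `e = explode (b·e)`.  Then `e` is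
the sequence `1 0^{z_1} 1 0^{z_2} 1 0^{z_3} ⋯` where `z_t` is the number of trailing
zeros of `t` in base `b`: equivalently (using `Σ_{t≤m} z_t = (m - D_m)/(b-1)`,
`D_m` the base-`b` digit sum), the 0-indexed position of the `(m+1)`-st one is
`m + (m - D_m)/(b-1)`, i.e. the 1-indexed position is `1 + m + (m - D_m)/(b-1)`. -/
theorem binary_fixed_point_of_explosion (b : ℕ) (hb : 2 ≤ b) (e : ℕ → ℕ)
    (hbinary : ∀ n, e n ≤ 1) (he0 : e 0 = 1)
    (hfix : e = explode (fun n => b * e n)) :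
    ∀ n, e n = 1 ↔ ∃ m : ℕ, n = m + (m - (Nat.digits b m).sum) / (b - 1) := by
  have hg0 : gg b 0 = 1 := by rw [← pp_zero b]; exact gg_pp b 0
  have heg : ∀ n, e n = gg b n := by
    intro n
    induction n using Nat.strong_induction_on with
    | _ n ih =>
      rcases Nat.eq_zero_or_pos n with h0 | h0
      · subst h0
        rw [he0, hg0]
      · have hen : e n = explode (fun k => b * e k) n := by rw [← hfix]
        rw [hen]
        simp only [explode]
        have hcond : (∃ t, (∑ i ∈ Finset.range t, (b * e i + 1)) ≤ n ∧
              n < (∑ i ∈ Finset.range t, (b * e i + 1)) + b * e t)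
            ↔ (∃ t, (∑ i ∈ Finset.range t, (b * gg b i + 1)) ≤ n ∧
              n < (∑ i ∈ Finset.range t, (b * gg b i + 1)) + b * gg b t) := by
          constructor
          · rintro ⟨t, h1, h2⟩
            rcases Nat.eq_zero_or_pos t with ht | ht
            · subst ht
              refine ⟨0, by simp, ?_⟩
              simp only [Finset.range_zero, Finset.sum_empty, Nat.zero_add] at h2 ⊢
              rw [hg0]; rw [he0] at h2; omega
            · have hSe : t + b ≤ ∑ i ∈ Finset.range t, (b * e i + 1) := by
                have hsplit : ∑ i ∈ Finset.range t, (b * e i + 1)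
                    = (b * e 0 + 1) + ∑ i ∈ Finset.Ico 1 t, (b * e i + 1) := by
                  rw [Finset.range_eq_Ico,
                    ← Finset.sum_Ico_consecutive _ (Nat.zero_le 1) ht]
                  simp
                have h2' : t - 1 ≤ ∑ i ∈ Finset.Ico 1 t, (b * e i + 1) := by
                  calc t - 1 = ∑ i ∈ Finset.Ico 1 t, 1 := by
                        rw [Finset.sum_const, Nat.card_Ico]; simp
                    _ ≤ _ := Finset.sum_le_sum (fun i _ => by omega)
                rw [he0] at hsplit
                omega
              have htn : t < n := by omega
              have heq : ∀ i, i ≤ t → e i = gg b i := fun i hi => ih i (by omega)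
              have hsum : ∑ i ∈ Finset.range t, (b * gg b i + 1)
                  = ∑ i ∈ Finset.range t, (b * e i + 1) := by
                apply Finset.sum_congr rfl
                intro i hi
                rw [heq i (by simp at hi; omega)]
              refine ⟨t, ?_, ?_⟩
              · rw [hsum]; exact h1
              · rw [hsum, ← heq t le_rfl]; exact h2
          · rintro ⟨t, h1, h2⟩
            rcases Nat.eq_zero_or_pos t with ht | ht
            · subst ht
              refine ⟨0, by simp, ?_⟩
              simp only [Finset.range_zero, Finset.sum_empty, Nat.zero_add] at h2 ⊢
              rw [he0]; rw [hg0] at h2; omega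
            · have hSg : t + b ≤ ∑ i ∈ Finset.range t, (b * gg b i + 1) := by
                have hsplit : ∑ i ∈ Finset.range t, (b * gg b i + 1)
                    = (b * gg b 0 + 1) + ∑ i ∈ Finset.Ico 1 t, (b * gg b i + 1) := by
                  rw [Finset.range_eq_Ico,
                    ← Finset.sum_Ico_consecutive _ (Nat.zero_le 1) ht]
                  simp
                have h2' : t - 1 ≤ ∑ i ∈ Finset.Ico 1 t, (b * gg b i + 1) := by
                  calc t - 1 = ∑ i ∈ Finset.Ico 1 t, 1 := by
                        rw [Finset.sum_const, Nat.card_Ico]; simp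
                    _ ≤ _ := Finset.sum_le_sum (fun i _ => by omega)
                rw [hg0] at hsplit
                omega
              have htn : t < n := by omega
              have heq : ∀ i, i ≤ t → e i = gg b i := fun i hi => ih i (by omega)
              have hsum : ∑ i ∈ Finset.range t, (b * e i + 1)
                  = ∑ i ∈ Finset.range t, (b * gg b i + 1) := by
                apply Finset.sum_congr rfl
                intro i hi
                rw [heq i (by simp at hi; omega)]
              refine ⟨t, ?_, ?_⟩
              · rw [hsum]; exact h1
              · rw [hsum, heq t le_rfl]; exact h2
        have hiff := hcond.trans (main_iff b hb n)
        rcases Classical.em (∃ m, n = pp b m) with h | h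
        · rw [if_pos (hiff.mpr h)]
          simp only [gg]
          rw [if_pos h]
        · rw [if_neg (fun hc => h (hiff.mp hc))]
          simp only [gg]
          rw [if_neg h]
  intro n
  rw [heg n]
  simp only [gg]
  rcases Classical.em (∃ m, n = pp b m) with h | h
  · rw [if_pos h]
    exact ⟨fun _ => h, fun _ => rfl⟩
  · rw [if_neg h]
    exact ⟨fun h01 => by omega, fun hm => absurd hm h⟩
end

section
/- Let T be a finite tree rooted at ρ and S a nonempty set of leaves with ρ ∉ S. Let π be a finite directed path in the graph G(T,S) (where each non-sink edge of T is duplicated in both directions, edges into S are directed toward S, and each sink has a directed edge to ρ) starting and ending at the same vertex. For each v ≠ ρ with parent u, let n_v and m_v be the number of traversals of π from u to v and from v to u respectively, let p_v be the probability random walk from v hits u before S, and set δ_v = p_v n_v - m_v. Then for any internal vertex v with children v^(1),...,v^(b): δ_v = p_v · Σ_{i=1}^b [ δ_{v^(i)} + (1 - p_{v^(i)})(n_{v^(i)} - m_v) ]. -/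
open Finset

variable {V : Type*} [Fintype V] [DecidableEq V]

/-- `hitIter G S u n w`: probability that simple random walk on `G` from `w` reaches
`u` before the sink set `S` within `n` steps. -/
noncomputable def hitIter (G : SimpleGraph V) [DecidableRel G.Adj]
    (S : Finset V) (u : V) : ℕ → V → ℝ
  | 0 => fun w => if w = u then 1 else 0
  | n + 1 => fun w =>
      if w = u then 1
      else if w ∈ S then 0
      else (∑ x ∈ G.neighborFinset w, hitIter G S u n x) / (G.degree w)

/-- `hitProb G S u w`: probability that simple random walk on `G` from `w` reaches
`u` before the sink set `S`. -/
noncomputable def hitProb (G : SimpleGraph V) [DecidableRel G.Adj]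
    (S : Finset V) (u : V) (w : V) : ℝ :=
  ⨆ n : ℕ, hitIter G S u n w

/-- `trav x L a b`: the number of traversals of the directed edge `(a, b)` by the
path `x 0, x 1, …, x L`. -/
def trav (x : ℕ → V) (L : ℕ) (a b : V) : ℕ :=
  ((Finset.range L).filter (fun i => x i = a ∧ x (i + 1) = b)).card

/-!
Two identities at `v` combine linearly into the recursion. Flow conservation of the closed
path at `v` reads `n_v + Σ m_c = m_v + Σ n_c`. For the probabilities, a walk started at a child
`c` can reach the parent `u` only through `v`, so `P_u(c) = p_v p_c` (with `P_u` the probability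
of hitting `u` before `S`), and harmonicity of `P_u` at `v` turns into `p_v (1 + Σ (1 - p_c)) = 1`.
-/

namespace SimpleGraph

variable {W : Type*}

def IsHarmonicAt (G : SimpleGraph W) [Fintype W] [DecidableRel G.Adj] (f : W → ℝ) (w : W) :
    Prop :=
  f w * G.degree w = ∑ y ∈ G.neighborFinset w, f y

section Harmonic

variable [Fintype W] {G : SimpleGraph W} [DecidableRel G.Adj]

lemma IsHarmonicAt.neg {f : W → ℝ} {w : W} (h : G.IsHarmonicAt f w) :
    G.IsHarmonicAt (-f) w := by
  simp only [IsHarmonicAt, Pi.neg_apply, neg_mul, sum_neg_distrib, neg_inj]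
  exact h

/-- Maximum principle: a positive maximum would spread along edges from harmonic vertices
to every vertex, including one outside `I`. -/
lemma Preconnected.le_zero_of_isHarmonicAt (hG : G.Preconnected) {I : Set W} {f : W → ℝ}
    (hI : ∃ z, z ∉ I) (hzero : ∀ w ∉ I, f w = 0) (hharm : ∀ w ∈ I, G.IsHarmonicAt f w)
    (w : W) : f w ≤ 0 := by
  obtain ⟨z, hz⟩ := hI
  have : Nonempty W := ⟨z⟩
  obtain ⟨a, ha⟩ := Finite.exists_max f
  by_contra! hpos
  have hM : 0 < f a := hpos.trans_le (ha w)
  have hspread : ∀ b c, G.Adj b c → f b = f a → f c = f a := by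
    intro b c hbc hb
    have hbI : b ∈ I := by_contra fun hbI => hM.ne' (hb ▸ hzero b hbI)
    have hsum : ∑ y ∈ G.neighborFinset b, f y = ∑ _y ∈ G.neighborFinset b, f a := by
      rw [← hharm b hbI, hb, sum_const, card_neighborFinset_eq_degree, nsmul_eq_mul, mul_comm]
    exact (sum_eq_sum_iff_of_le fun y _ => ha y).mp hsum c (by simpa using hbc)
  have hwalk : ∀ {b c} (q : G.Walk b c), f b = f a → f c = f a := by
    intro b c q
    induction q with
    | nil => exact id
    | cons h _ ih => exact fun hb => ih (hspread _ _ h hb)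
  obtain ⟨p⟩ := hG a z
  exact hM.ne' ((hwalk p rfl).symm.trans (hzero z hz))

lemma Preconnected.eq_zero_of_isHarmonicAt (hG : G.Preconnected) {I : Set W} {f : W → ℝ}
    (hI : ∃ z, z ∉ I) (hzero : ∀ w ∉ I, f w = 0) (hharm : ∀ w ∈ I, G.IsHarmonicAt f w)
    (w : W) : f w = 0 := by
  have hneg := hG.le_zero_of_isHarmonicAt (f := -f) hI (by simpa using hzero)
    (fun w hw => (hharm w hw).neg) w
  simp only [Pi.neg_apply, neg_nonpos] at hneg
  exact le_antisymm (hG.le_zero_of_isHarmonicAt hI hzero hharm w) hneg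

end Harmonic

section Branch

variable {G : SimpleGraph W} {u v w : W}

/-- For adjacent `u, v` in a tree, the subtree hanging from `v` when rooted on the side of `u`. -/
def branch (G : SimpleGraph W) (u v : W) : Set W :=
  {w | ∃ p : G.Walk v w, u ∉ p.support}

lemma start_mem_branch (huv : u ≠ v) : v ∈ G.branch u v :=
  ⟨Walk.nil, by simpa using huv⟩

lemma notMem_branch : u ∉ G.branch u v :=
  fun ⟨p, hp⟩ => hp p.end_mem_support

lemma mem_branch_of_adj {y : W} (hw : w ∈ G.branch u v) (hwy : G.Adj w y) (hyu : y ≠ u) :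
    y ∈ G.branch u v := by
  obtain ⟨p, hp⟩ := hw
  refine ⟨p.concat hwy, ?_⟩
  simp only [Walk.support_concat, List.mem_append, List.mem_singleton, not_or]
  exact ⟨hp, hyu.symm⟩

/-- In a forest the edge `uv` is a bridge, so the only way out of the branch is through `v`. -/
lemma IsAcyclic.eq_of_mem_branch_of_adj (hG : G.IsAcyclic) (huv : G.Adj u v)
    (hw : w ∈ G.branch u v) (hwu : G.Adj w u) : w = v := by
  obtain ⟨p, hp⟩ := hw
  have hbridge := isBridge_iff_forall_walk_mem_edges.mp
    (isAcyclic_iff_forall_isBridge.mp hG huv.symm) (p.concat hwu)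
  simp only [Walk.edges_concat, List.concat_eq_append, List.mem_append, List.mem_singleton,
    Sym2.eq_iff] at hbridge
  rcases hbridge with h | ⟨h, -⟩ | ⟨h, -⟩
  · exact absurd (p.snd_mem_support_of_mem_edges h) hp
  · exact h.symm
  · exact absurd h huv.ne.symm

end Branch

end SimpleGraph

open SimpleGraph

section HitProb

variable {G : SimpleGraph V} [DecidableRel G.Adj] {S : Finset V} {u : V}

lemma hitIter_nonneg (n : ℕ) (w : V) : 0 ≤ hitIter G S u n w := by
  induction n generalizing w with
  | zero => unfold hitIter; positivity
  | succ n ih =>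
    unfold hitIter
    split_ifs
    · exact zero_le_one
    · exact le_rfl
    · exact div_nonneg (sum_nonneg fun y _ => ih y) (Nat.cast_nonneg _)

lemma hitIter_le_one (n : ℕ) (w : V) : hitIter G S u n w ≤ 1 := by
  induction n generalizing w with
  | zero => unfold hitIter; split_ifs <;> norm_num
  | succ n ih =>
    unfold hitIter
    split_ifs
    · exact le_rfl
    · exact zero_le_one
    · refine div_le_one_of_le₀ ?_ (Nat.cast_nonneg _)
      calc ∑ y ∈ G.neighborFinset w, hitIter G S u n y
          ≤ ∑ _y ∈ G.neighborFinset w, (1 : ℝ) := sum_le_sum fun y _ => ih y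
        _ = G.degree w := by simp

lemma hitIter_le_succ (n : ℕ) (w : V) : hitIter G S u n w ≤ hitIter G S u (n + 1) w := by
  induction n generalizing w with
  | zero =>
    unfold hitIter
    split_ifs
    · exact le_rfl
    · exact le_rfl
    · exact div_nonneg (sum_nonneg fun y _ => hitIter_nonneg 0 y) (Nat.cast_nonneg _)
  | succ n ih =>
    unfold hitIter
    split_ifs
    · exact le_rfl
    · exact le_rfl
    · gcongr with y
      exact ih y

lemma tendsto_hitIter (w : V) :
    Filter.Tendsto (hitIter G S u · w) Filter.atTop (nhds (hitProb G S u w)) :=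
  tendsto_atTop_ciSup (monotone_nat_of_le_succ fun n => hitIter_le_succ n w)
    ⟨1, Set.forall_mem_range.mpr fun n => hitIter_le_one n w⟩

lemma hitProb_self : hitProb G S u u = 1 := by
  have : ∀ n, hitIter G S u n u = 1 := fun n => by cases n <;> simp [hitIter]
  simp only [hitProb, this, ciSup_const]

lemma hitProb_of_mem {s : V} (hs : s ∈ S) (hsu : s ≠ u) : hitProb G S u s = 0 := by
  have : ∀ n, hitIter G S u n s = 0 := fun n => by cases n <;> simp [hitIter, hs, hsu]
  simp only [hitProb, this, ciSup_const]

lemma hitIter_succ_mul_degree {w : V} (hwu : w ≠ u) (hwS : w ∉ S) (n : ℕ) :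
    hitIter G S u (n + 1) w * G.degree w = ∑ y ∈ G.neighborFinset w, hitIter G S u n y := by
  simp only [hitIter, if_neg hwu, if_neg hwS]
  rcases eq_or_ne (G.degree w) 0 with hdeg | hdeg
  · rw [← card_neighborFinset_eq_degree, card_eq_zero] at hdeg
    simp [hdeg]
  · exact div_mul_cancel₀ _ (Nat.cast_ne_zero.mpr hdeg)

lemma isHarmonicAt_hitProb {w : V} (hwu : w ≠ u) (hwS : w ∉ S) :
    G.IsHarmonicAt (hitProb G S u) w :=
  tendsto_nhds_unique (((Filter.tendsto_add_atTop_iff_nat 1).mpr (tendsto_hitIter w)).mul_const _)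
    (by simpa only [hitIter_succ_mul_degree hwu hwS]
      using tendsto_finsetSum _ fun y _ => tendsto_hitIter y)

end HitProb

section Tree

variable {G : SimpleGraph V} [DecidableRel G.Adj] {S : Finset V} {u v : V}

/-- Both sides are harmonic on the branch off `{v} ∪ S` and agree on `{v} ∪ S`. -/
lemma hitProb_eq_mul_of_mem_branch (hT : G.IsTree) (huv : G.Adj u v) {w : V}
    (hw : w ∈ G.branch u v) : hitProb G S u w = hitProb G S u v * hitProb G S v w := by
  let d : V → ℝ := (G.branch u v).indicator
    fun w => hitProb G S u w - hitProb G S u v * hitProb G S v w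
  have hd : ∀ w ∈ G.branch u v, d w = hitProb G S u w - hitProb G S u v * hitProb G S v w :=
    fun w hw => Set.indicator_of_mem hw _
  have hzero : ∀ w ∉ G.branch u v \ ({v} ∪ S), d w = 0 := by
    intro w hw
    by_cases hwR : w ∈ G.branch u v
    · have hwu : w ≠ u := fun h => notMem_branch (h ▸ hwR)
      simp only [hwR, Set.mem_sdiff, Set.mem_union, Set.mem_singleton_iff, Finset.mem_coe,
        true_and, not_not] at hw
      rw [hd w hwR, sub_eq_zero]
      rcases eq_or_ne w v with rfl | hwv
      · rw [hitProb_self, mul_one]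
      · have hwS : w ∈ S := hw.resolve_left hwv
        rw [hitProb_of_mem hwS hwu, hitProb_of_mem hwS hwv, mul_zero]
    · exact Set.indicator_of_notMem hwR _
  have hharm : ∀ w ∈ G.branch u v \ ({v} ∪ S), G.IsHarmonicAt d w := by
    rintro w ⟨hwR, hwvS⟩
    simp only [Set.mem_union, Set.mem_singleton_iff, Finset.mem_coe, not_or] at hwvS
    have hwu : w ≠ u := fun h => notMem_branch (h ▸ hwR)
    have hnbr : ∀ y ∈ G.neighborFinset w,
        d y = hitProb G S u y - hitProb G S u v * hitProb G S v y := by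
      intro y hy
      rw [mem_neighborFinset] at hy
      have hyu : y ≠ u := fun h =>
        hwvS.1 (hT.isAcyclic.eq_of_mem_branch_of_adj huv hwR (h ▸ hy))
      exact hd y (mem_branch_of_adj hwR hy hyu)
    rw [IsHarmonicAt, sum_congr rfl hnbr, sum_sub_distrib, ← mul_sum,
      ← isHarmonicAt_hitProb hwu hwvS.2, ← isHarmonicAt_hitProb hwvS.1 hwvS.2,
      hd w hwR]
    ring
  have := hT.connected.preconnected.eq_zero_of_isHarmonicAt
    ⟨u, fun h => notMem_branch h.1⟩ hzero hharm w
  rwa [hd w hw, sub_eq_zero] at this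

lemma hitProb_mul_one_add_sum (hT : G.IsTree) (huv : G.Adj u v) (hvS : v ∉ S) :
    hitProb G S u v * (1 + ∑ c ∈ G.neighborFinset v \ {u}, (1 - hitProb G S v c)) = 1 := by
  have hu : u ∈ G.neighborFinset v := by simpa using huv.symm
  have hchild : ∀ c ∈ G.neighborFinset v \ {u},
      hitProb G S u c = hitProb G S u v * hitProb G S v c := by
    intro c hc
    simp only [Finset.mem_sdiff, mem_neighborFinset, Finset.mem_singleton] at hc
    exact hitProb_eq_mul_of_mem_branch hT huv
      (mem_branch_of_adj (start_mem_branch huv.ne) hc.1 hc.2)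
  have hdeg : (G.degree v : ℝ) = 1 + #(G.neighborFinset v \ {u}) := by
    rw [← card_neighborFinset_eq_degree,
      ← card_sdiff_add_card_eq_card (singleton_subset_iff.mpr hu), card_singleton]
    push_cast
    ring
  have hharm : G.IsHarmonicAt (hitProb G S u) v := isHarmonicAt_hitProb huv.ne.symm hvS
  rw [IsHarmonicAt, sum_eq_add_sum_sdiff_singleton_of_mem hu, hitProb_self,
    sum_congr rfl hchild, ← mul_sum, hdeg] at hharm
  rw [sum_sub_distrib, sum_const, nsmul_one]
  linear_combination hharm

end Tree

section Traversals

lemma card_filter_succ_eq_of_closed {α : Type*} [DecidableEq α] {x : ℕ → α} {L : ℕ}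
    (hclosed : x 0 = x L) (v : α) :
    #{i ∈ range L | x (i + 1) = v} = #{i ∈ range L | x i = v} := by
  rw [card_filter, card_filter]
  have h₁ := sum_range_succ' (fun i => if x i = v then 1 else 0) L
  have h₂ := sum_range_succ (fun i => if x i = v then 1 else 0) L
  simp only [hclosed] at h₁
  omega

variable {G : SimpleGraph V} [DecidableRel G.Adj] (x : ℕ → V) (L : ℕ)

lemma sum_trav_into (v : V) (h : ∀ i < L, x (i + 1) = v → G.Adj (x i) v) :
    ∑ w ∈ G.neighborFinset v, trav x L w v = #{i ∈ range L | x (i + 1) = v} := by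
  rw [card_eq_sum_card_fiberwise (f := x) (t := G.neighborFinset v) fun i hi => by
    simp only [coe_filter, Set.mem_ofPred_eq, mem_range] at hi
    simpa using (h i hi.1 hi.2).symm]
  refine sum_congr rfl fun w _ => ?_
  rw [trav, filter_filter]
  simp only [and_comm]

lemma sum_trav_out (v : V) (h : ∀ i < L, x i = v → G.Adj v (x (i + 1))) :
    ∑ w ∈ G.neighborFinset v, trav x L v w = #{i ∈ range L | x i = v} := by
  rw [card_eq_sum_card_fiberwise (f := fun i => x (i + 1)) (t := G.neighborFinset v)
      fun i hi => by
        simp only [coe_filter, Set.mem_ofPred_eq, mem_range] at hi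
        simpa using h i hi.1 hi.2]
  refine sum_congr rfl fun w _ => ?_
  rw [trav, filter_filter]

end Traversals

theorem discrepancy_recursion_general (G : SimpleGraph V) [DecidableRel G.Adj]
    (hT : G.IsTree) (ρ : V)
    (S : Finset V)
    (x : ℕ → V) (L : ℕ) (hclosed : x 0 = x L)
    (hpath : ∀ i < L, (x i ∉ S ∧ G.Adj (x i) (x (i + 1))) ∨ (x i ∈ S ∧ x (i + 1) = ρ))
    (v : V) (hv : v ≠ ρ) (hvS : v ∉ S)
    (u : V) (hadj : G.Adj u v) :
    hitProb G S u v * (trav x L u v : ℝ) - (trav x L v u : ℝ)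
      = hitProb G S u v *
          ∑ c ∈ G.neighborFinset v \ {u},
            ((hitProb G S v c * (trav x L v c : ℝ) - (trav x L c v : ℝ))
              + (1 - hitProb G S v c) * ((trav x L v c : ℝ) - (trav x L v u : ℝ))) := by
  have hinto : ∀ i < L, x (i + 1) = v → G.Adj (x i) v := fun i hi hxi => by
    rcases hpath i hi with ⟨-, h⟩ | ⟨-, h⟩
    exacts [hxi ▸ h, absurd (hxi.symm.trans h) hv]
  have hout : ∀ i < L, x i = v → G.Adj v (x (i + 1)) := fun i hi hxi => by
    rcases hpath i hi with ⟨-, h⟩ | ⟨h, -⟩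
    exacts [hxi ▸ h, absurd (hxi ▸ h) hvS]
  have hflow := (sum_trav_into x L v hinto).trans
    ((card_filter_succ_eq_of_closed hclosed v).trans (sum_trav_out x L v hout).symm)
  have hu : u ∈ G.neighborFinset v := by simpa using hadj.symm
  rw [sum_eq_add_sum_sdiff_singleton_of_mem hu, sum_eq_add_sum_sdiff_singleton_of_mem hu] at hflow
  have hflowℝ := congrArg (Nat.cast : ℕ → ℝ) hflow
  push_cast at hflowℝ
  rw [sum_congr rfl fun c _ => show (hitProb G S v c * (trav x L v c : ℝ) - trav x L c v)
      + (1 - hitProb G S v c) * ((trav x L v c : ℝ) - trav x L v u)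
      = ((trav x L v c : ℝ) - trav x L c v) - trav x L v u * (1 - hitProb G S v c) by ring,
    sum_sub_distrib, sum_sub_distrib, ← mul_sum]
  linear_combination hitProb G S u v * hflowℝ
    + (trav x L v u : ℝ) * hitProb_mul_one_add_sum (S := S) hT hadj hvS

/-- Discrepancy recursion along a closed path in the directed graph `G(T,S)`.  `T` is
a finite tree rooted at `ρ` (degree 1) with sink leaves `S ∌ ρ`; in `G(T,S)` each
edge of `T` not incident to `S` is directed both ways, edges into `S` are directed
towards `S`, and each sink has a directed edge to `ρ`.  For a closed directed path
`x 0, …, x L` and a non-root internal vertex `v` with parent `u`, setting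
`n_w, m_w` to be the numbers of traversals from the parent of `w` to `w` and back,
`p_w = hitProb G S (parent w) w`, and `δ_w = p_w n_w - m_w`, we have
`δ_v = p_v · Σᵢ [δ_{v⁽ⁱ⁾} + (1 - p_{v⁽ⁱ⁾})(n_{v⁽ⁱ⁾} - m_v)]`, the sum over the
children of `v`. -/
theorem discrepancy_recursion (G : SimpleGraph V) [DecidableRel G.Adj]
    (hT : G.IsTree) (ρ : V) (hρdeg : G.degree ρ = 1)
    (S : Finset V) (hS : S.Nonempty) (hSleaf : ∀ s ∈ S, G.degree s = 1)
    (hρS : ρ ∉ S)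
    (x : ℕ → V) (L : ℕ) (hclosed : x 0 = x L)
    (hpath : ∀ i < L, (x i ∉ S ∧ G.Adj (x i) (x (i + 1))) ∨ (x i ∈ S ∧ x (i + 1) = ρ))
    (v : V) (hv : v ≠ ρ) (hvS : v ∉ S)
    (u : V) (hadj : G.Adj u v) (hparent : G.dist ρ u + 1 = G.dist ρ v) :
    hitProb G S u v * (trav x L u v : ℝ) - (trav x L v u : ℝ)
      = hitProb G S u v *
          ∑ c ∈ G.neighborFinset v \ {u},
            ((hitProb G S v c * (trav x L v c : ℝ) - (trav x L c v : ℝ))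
              + (1 - hitProb G S v c) * ((trav x L v c : ℝ) - (trav x L v u : ℝ))) :=
  discrepancy_recursion_general G hT ρ S x L hclosed hpath v hv hvS u hadj
end

section
/- Let b ≥ 2 and 0 ≤ k < b, and let E_n count the ones among the first n entries of the escape sequence e(𝕋_b, k) given by Proposition: e = 1 0^{w_1} 1 0^{w_2} ⋯ with w_t = z_t if k = 0 and w_t = [ℓ_t = b-k] if k > 0. Set ρ = (b-1)/b and Δ_n = (E_n - ρn)/log_b n. Then liminf_n Δ_n = 0 if k = 0, liminf_n Δ_n = -(k-1)/b if k > 0, and limsup_n Δ_n = (b-k-1)/b. -/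
/-- The block lengths of the escape sequence of the `b`-ary tree with constant rotor
configuration `k`: `w t = z_t` (number of trailing zeros of `t` in base `b`) when
`k = 0`, and `w t = [ℓ_t = b-k]` (indicator that the last nonzero base-`b` digit of
`t` is `b-k`) when `k > 0`. -/
def blockLen (b k t : ℕ) : ℕ :=
  if k = 0 then Nat.maxPowDiv b t
  else if (t / b ^ Nat.maxPowDiv b t) % b = b - k then 1 else 0

open Classical in
/-- The explicit escape sequence `e = 1 0^{w_1} 1 0^{w_2} 1 0^{w_3} ⋯` (indexed from
0, so `e 0` is `e_1`): position `n` is a one exactly when `n = m + Σ_{t=1}^m w_t`. -/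
noncomputable def explicitSeq (b k : ℕ) : ℕ → ℕ := fun n =>
  if ∃ m : ℕ, n = m + ∑ t ∈ Finset.Icc 1 m, blockLen b k t then 1 else 0

/-!
Write `S m = ∑_{t ≤ m} w_t`, so that the ones of `e` sit at the positions `T m = m + S m` and
`E_n = #{m | T m < n}`. Splitting `t ≤ a + b m` into multiples of `b` and the rest gives
`S (a + b m) = S m + m + [b ≤ a + k]` for a digit `a`. Hence the defect
`D m = m - (b - 1) S m = b (m - ρ T m)` is the sum, over the base-`b` digits `a` of `m`, of
`a - (b - 1) [b ≤ a + k]`, which lies in `[min 0 (1 - k), b - 1 - k]`. Since `E_n - ρ n` lies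
between `D (E_n) / b` and `(D (E_n - 1) + 1) / b`, and `E_n ≤ n` has at most `log_b n + 1` digits,
`Δ_n` is asymptotically confined to `[min 0 (1 - k), b - 1 - k] / b`. Both ends are attained along
`n = T m` for the `m` whose base-`b` digits are `1 r r … r`, with `r` a digit of extremal weight.
-/

namespace Filter

open Topology

theorem limsup_eq_of_eventually_le_of_tendsto_comp {α β γ : Type*}
    [ConditionallyCompleteLinearOrder β] [TopologicalSpace β] [OrderTopology β]
    {u v : α → β} {l : Filter α} {l' : Filter γ} [l'.NeBot] {φ : γ → α} {c : β}
    (hφ : Tendsto φ l' l) (huv : u ≤ᶠ[l] v) (hv : Tendsto v l (𝓝 c))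
    (hu : Tendsto (fun x => u (φ x)) l' (𝓝 c)) : limsup u l = c := by
  have := hφ.neBot
  replace hu : Tendsto u (map φ l') (𝓝 c) := tendsto_map'_iff.2 hu
  have hco : IsCoboundedUnder (· ≤ ·) l u :=
    hu.isCoboundedUnder_le.mono (map_mono hφ)
  refine le_antisymm ((limsup_le_limsup huv hco hv.isBoundedUnder_le).trans hv.limsup_eq.le) ?_
  rw [← hu.limsup_eq]
  exact limsup_le_limsup_of_le hφ hu.isCoboundedUnder_le
    (hv.isBoundedUnder_le.mono_le huv)

theorem liminf_eq_of_eventually_ge_of_tendsto_comp {α β γ : Type*}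
    [ConditionallyCompleteLinearOrder β] [TopologicalSpace β] [OrderTopology β]
    {u v : α → β} {l : Filter α} {l' : Filter γ} [l'.NeBot] {φ : γ → α} {c : β}
    (hφ : Tendsto φ l' l) (hvu : v ≤ᶠ[l] u) (hv : Tendsto v l (𝓝 c))
    (hu : Tendsto (fun x => u (φ x)) l' (𝓝 c)) : liminf u l = c :=
  limsup_eq_of_eventually_le_of_tendsto_comp (β := βᵒᵈ) hφ hvu hv hu

end Filter

open Classical in
theorem StrictMono.lt_sum_range_ite_iff {T : ℕ → ℕ} (hT : StrictMono T) (n m : ℕ) :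
    m < ∑ i ∈ Finset.range n, (if ∃ j, i = T j then 1 else 0) ↔ T m < n := by
  induction n generalizing m with
  | zero => simp
  | succ n ih =>
    rw [Finset.sum_range_succ]
    by_cases hn : ∃ j, n = T j
    · obtain ⟨j, rfl⟩ := hn
      have hj : ∑ i ∈ Finset.range (T j), (if ∃ j, i = T j then 1 else 0) = j :=
        eq_of_forall_lt_iff fun c => (ih c).trans hT.lt_iff_lt
      rw [if_pos ⟨j, rfl⟩, hj, Nat.lt_add_one_iff, Nat.lt_add_one_iff, hT.le_iff_le]
    · have hm : T m ≠ n := fun h => hn ⟨m, h.symm⟩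
      rw [if_neg hn, add_zero, ih]
      omega

namespace EscapeSequence

open Finset Filter Topology

variable {b k : ℕ}

theorem blockLen_def (b k t : ℕ) : blockLen b k t =
    if k = 0 then padicValNat b t else if t / b ^ padicValNat b t % b = b - k then 1 else 0 :=
  rfl

theorem blockLen_base_mul (hb : 1 < b) {s : ℕ} (hs : s ≠ 0) :
    blockLen b k (b * s) = blockLen b k s + if k = 0 then 1 else 0 := by
  rw [blockLen_def, blockLen_def, padicValNat_base_mul hb hs, pow_succ',
    Nat.mul_div_mul_left _ _ (by omega)]
  split_ifs <;> rfl

theorem blockLen_of_not_dvd (hb : 0 < b) {t : ℕ} (ht : ¬b ∣ t) :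
    blockLen b k t = if t % b + k = b then 1 else 0 := by
  have := Nat.mod_lt t hb
  rw [blockLen_def, padicValNat.eq_zero_of_not_dvd ht, pow_zero, Nat.div_one]
  split_ifs <;> omega

def blockSum (b k m : ℕ) : ℕ := ∑ t ∈ Icc 1 m, blockLen b k t

theorem blockSum_succ (b k m : ℕ) :
    blockSum b k (m + 1) = blockSum b k m + blockLen b k (m + 1) :=
  sum_Icc_succ_top (by omega) _

theorem blockSum_eq_blockSum_div (hb : 1 < b) (hk : k < b) (n : ℕ) :
    blockSum b k n = blockSum b k (n / b) + n / b + if b ≤ n % b + k then 1 else 0 := by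
  induction n with
  | zero => simp [blockSum, Nat.not_le.2 hk]
  | succ n ih =>
    have hn := Nat.div_add_mod n b
    have hn' := Nat.div_add_mod (n + 1) b
    have hnb := Nat.mod_lt n (by omega : 0 < b)
    have hnb' := Nat.mod_lt (n + 1) (by omega : 0 < b)
    rw [blockSum_succ, ih]
    by_cases h : b ∣ n + 1
    · have hq : n + 1 = b * (n / b + 1) := by rw [← Nat.succ_div_of_dvd h, Nat.mul_div_cancel' h]
      have hq' : b * (n / b + 1) = b * (n / b) + b := by ring
      rw [Nat.succ_div_of_dvd h, Nat.mod_eq_zero_of_dvd h, blockSum_succ, hq,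
        blockLen_base_mul hb (n / b).add_one_ne_zero]
      split_ifs <;> omega
    · rw [Nat.succ_div_of_not_dvd h] at hn' ⊢
      rw [blockLen_of_not_dvd (by omega) h]
      split_ifs <;> omega

theorem blockSum_le_self (hb : 1 < b) (hk : k < b) (n : ℕ) : blockSum b k n ≤ n := by
  induction n using Nat.strong_induction_on with
  | _ n ih =>
    rcases Nat.eq_zero_or_pos n with rfl | hn
    · simp [blockSum]
    have hq := ih (n / b) (Nat.div_lt_self hn hb)
    have hn := Nat.div_add_mod n b
    have hbq : 2 * (n / b) ≤ b * (n / b) := Nat.mul_le_mul_right _ hb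
    rw [blockSum_eq_blockSum_div hb hk n]
    split_ifs <;> omega

def digitWeight (b k a : ℕ) : ℤ := a - (b - 1) * if b ≤ a + k then 1 else 0

theorem digitWeight_le (hk : k < b) {a : ℕ} (ha : a < b) : digitWeight b k a ≤ b - 1 - k := by
  unfold digitWeight; split_ifs <;> omega

-- `(k - 1 : ℕ)` truncates: the bound is `0` for `k = 0` and `1 - k` otherwise.
theorem neg_le_digitWeight (b k a : ℕ) : -((k - 1 : ℕ) : ℤ) ≤ digitWeight b k a := by
  unfold digitWeight; split_ifs <;> omega

theorem digitWeight_sub_one_sub (hk : k < b) : digitWeight b k (b - 1 - k) = (b : ℤ) - 1 - k := by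
  unfold digitWeight; split_ifs <;> omega

theorem digitWeight_sub_mod (hk : k < b) :
    digitWeight b k ((b - k) % b) = -((k - 1 : ℕ) : ℤ) := by
  rcases Nat.eq_zero_or_pos k with rfl | hk0
  · simp [digitWeight, hk.ne']
  · rw [Nat.mod_eq_of_lt (by omega)]
    unfold digitWeight; split_ifs <;> omega

def defect (b k m : ℕ) : ℤ := m - (b - 1) * blockSum b k m

theorem defect_add_base_mul (hb : 1 < b) (hk : k < b) {a : ℕ} (ha : a < b) (m : ℕ) :
    defect b k (a + b * m) = digitWeight b k a + defect b k m := by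
  rw [defect, blockSum_eq_blockSum_div hb hk, Nat.add_mul_div_left _ _ (by omega),
    Nat.div_eq_of_lt ha, Nat.add_mul_mod_self_left, Nat.mod_eq_of_lt ha, zero_add, digitWeight,
    defect]
  push_cast
  ring

theorem defect_ofDigits (hb : 1 < b) (hk : k < b) {L : List ℕ} (hL : ∀ a ∈ L, a < b) :
    defect b k (Nat.ofDigits b L) = (L.map (digitWeight b k)).sum := by
  induction L with
  | nil => simp [defect, blockSum]
  | cons a L ih =>
    rw [Nat.ofDigits_cons, defect_add_base_mul hb hk (hL a (by simp)),
      ih fun x hx => hL x (by simp [hx]), List.map_cons, List.sum_cons]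

theorem defect_eq_sum_digits (hb : 1 < b) (hk : k < b) (m : ℕ) :
    defect b k m = ((Nat.digits b m).map (digitWeight b k)).sum := by
  conv_lhs => rw [← Nat.ofDigits_digits b m]
  exact defect_ofDigits hb hk fun a ha => Nat.digits_lt_base hb ha

theorem length_digits_le_log_add_one (hb : 1 < b) (m : ℕ) :
    (Nat.digits b m).length ≤ Nat.log b m + 1 :=
  (Nat.digits_length_le_iff hb m).2 (Nat.lt_pow_succ_log_self hb m)

theorem defect_le (hb : 1 < b) (hk : k < b) (m : ℕ) :
    defect b k m ≤ (b - 1 - k) * (Nat.log b m + 1) := by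
  rw [defect_eq_sum_digits hb hk]
  calc _ ≤ ((Nat.digits b m).map (digitWeight b k)).length • ((b : ℤ) - 1 - k) :=
        List.sum_le_card_nsmul _ _ <| List.forall_mem_map.2 fun a ha =>
          digitWeight_le hk (Nat.digits_lt_base hb ha)
    _ ≤ _ := by
        rw [List.length_map, nsmul_eq_mul, mul_comm]
        gcongr
        · omega
        · exact_mod_cast length_digits_le_log_add_one hb m

theorem le_defect (hb : 1 < b) (hk : k < b) (m : ℕ) :
    -((k - 1 : ℕ) : ℤ) * (Nat.log b m + 1) ≤ defect b k m := by
  rw [defect_eq_sum_digits hb hk]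
  calc _ ≤ ((Nat.digits b m).map (digitWeight b k)).length • -((k - 1 : ℕ) : ℤ) := by
        rw [List.length_map, nsmul_eq_mul, mul_comm, mul_neg, mul_neg, neg_le_neg_iff]
        gcongr
        exact_mod_cast length_digits_le_log_add_one hb m
    _ ≤ _ := List.card_nsmul_le_sum _ _ <| List.forall_mem_map.2 fun a _ =>
        neg_le_digitWeight b k a

theorem defect_ofDigits_replicate_append_one (hb : 1 < b) (hk : k < b) {r : ℕ} (hr : r < b)
    (J : ℕ) : defect b k (Nat.ofDigits b (List.replicate J r ++ [1])) =
      J * digitWeight b k r + digitWeight b k 1 := by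
  rw [defect_ofDigits hb hk (by simp; omega)]
  simp

theorem le_ofDigits_replicate_append_one (r J : ℕ) :
    b ^ J ≤ Nat.ofDigits b (List.replicate J r ++ [1]) := by
  simp [Nat.ofDigits_append]

theorem log_ofDigits_replicate_append_one (hb : 1 < b) {r : ℕ} (hr : r < b) (J : ℕ) :
    Nat.log b (Nat.ofDigits b (List.replicate J r ++ [1])) = J := by
  have hd := Nat.digits_ofDigits b hb (List.replicate J r ++ [1])
    (by simp; omega) (by simp)
  have hne : Nat.ofDigits b (List.replicate J r ++ [1]) ≠ 0 := by
    intro h; simp [h] at hd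
  have := Nat.length_digits b _ hb hne
  rw [hd] at this
  simp at this
  omega

-- The position, counting from `0`, of the `(m + 1)`-st one of `explicitSeq b k`.
def onePos (b k m : ℕ) : ℕ := m + blockSum b k m

theorem onePos_strictMono : StrictMono (onePos b k) :=
  strictMono_nat_of_lt_succ fun m => by rw [onePos, onePos, blockSum_succ]; omega

theorem onePos_le (hb : 1 < b) (hk : k < b) (m : ℕ) : onePos b k m ≤ 2 * m := by
  have := blockSum_le_self hb hk m
  unfold onePos; omega

noncomputable def onesCount (b k n : ℕ) : ℕ := ∑ i ∈ range n, explicitSeq b k i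

theorem lt_onesCount_iff (m n : ℕ) : m < onesCount b k n ↔ onePos b k m < n :=
  onePos_strictMono.lt_sum_range_ite_iff n m

theorem onesCount_onePos (m : ℕ) : onesCount b k (onePos b k m) = m :=
  eq_of_forall_lt_iff fun c => (lt_onesCount_iff c _).trans onePos_strictMono.lt_iff_lt

theorem onesCount_le (n : ℕ) : onesCount b k n ≤ n :=
  not_lt.1 fun h => ((lt_onesCount_iff n n).1 h).not_ge (Nat.le_add_right n _)

theorem natCast_sub_mul_onePos (hb : b ≠ 0) (m : ℕ) :
    (m : ℝ) - ((b : ℝ) - 1) / b * onePos b k m = defect b k m / b := by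
  rw [onePos, defect]
  push_cast
  field_simp
  ring

theorem natLog_le_logb_of_le {m n : ℕ} (h : m ≤ n) : (Nat.log b m : ℝ) ≤ Real.logb b n :=
  (Nat.cast_le.2 (Nat.log_mono_right h)).trans (Real.natLog_le_logb n b)

theorem logb_lt_natLog_add_one (b n : ℕ) : Real.logb b n < Nat.log b n + 1 := by
  rw [← Real.natFloor_logb_natCast]
  exact Nat.lt_floor_add_one _

theorem onesCount_sub_le (hb : 1 < b) (hk : k < b) {n : ℕ} (hn : n ≠ 0) :
    (onesCount b k n : ℝ) - ((b : ℝ) - 1) / b * n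
      ≤ (((b : ℝ) - 1 - k) * (Real.logb b n + 1) + 1) / b := by
  set m := onesCount b k n
  have hm : 0 < m := (lt_onesCount_iff 0 n).2 (by simp [onePos, blockSum]; omega)
  have hTm : (onePos b k (m - 1) : ℝ) + 1 ≤ n := by
    exact_mod_cast (lt_onesCount_iff (m - 1) n).1 (by omega)
  have hD : (defect b k (m - 1) : ℝ) ≤ ((b : ℝ) - 1 - k) * (Real.logb b n + 1) := by
    have hlog := natLog_le_logb_of_le (b := b) ((Nat.sub_le m 1).trans (onesCount_le n))
    calc (defect b k (m - 1) : ℝ) ≤ ((b : ℝ) - 1 - k) * (Nat.log b (m - 1) + 1) := by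
          exact_mod_cast defect_le hb hk (m - 1)
      _ ≤ _ := by
          gcongr
          have : (k : ℝ) + 1 ≤ b := by exact_mod_cast hk
          linarith
  have hρ : 0 ≤ ((b : ℝ) - 1) / b :=
    div_nonneg (by linarith [(Nat.one_lt_cast.2 hb : (1 : ℝ) < b)]) (by positivity)
  have hsplit := natCast_sub_mul_onePos (k := k) (by omega : b ≠ 0) (m - 1)
  rw [Nat.cast_sub hm, Nat.cast_one] at hsplit
  calc (m : ℝ) - ((b : ℝ) - 1) / b * n
        ≤ (m : ℝ) - ((b : ℝ) - 1) / b * (onePos b k (m - 1) + 1) := by gcongr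
    _ = (defect b k (m - 1) + 1) / b := by
        field_simp at hsplit ⊢
        linarith
    _ ≤ _ := by gcongr

theorem le_onesCount_sub (hb : 1 < b) (hk : k < b) (n : ℕ) :
    -((k - 1 : ℕ) : ℝ) * (Real.logb b n + 1) / b
      ≤ (onesCount b k n : ℝ) - ((b : ℝ) - 1) / b * n := by
  set m := onesCount b k n
  have hTm : (n : ℝ) ≤ onePos b k m := by
    exact_mod_cast not_lt.1 fun h => (lt_irrefl m) ((lt_onesCount_iff m n).2 h)
  have hD : -((k - 1 : ℕ) : ℝ) * (Real.logb b n + 1) ≤ defect b k m := by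
    have hlog := natLog_le_logb_of_le (b := b) (onesCount_le (b := b) (k := k) n)
    calc -((k - 1 : ℕ) : ℝ) * (Real.logb b n + 1)
        ≤ -((k - 1 : ℕ) : ℝ) * (Nat.log b m + 1) := by
          rw [neg_mul, neg_mul, neg_le_neg_iff]
          gcongr
      _ ≤ defect b k m := by exact_mod_cast le_defect hb hk m
  have hρ : 0 ≤ ((b : ℝ) - 1) / b :=
    div_nonneg (by linarith [(Nat.one_lt_cast.2 hb : (1 : ℝ) < b)]) (by positivity)
  calc -((k - 1 : ℕ) : ℝ) * (Real.logb b n + 1) / b ≤ defect b k m / b := by gcongr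
    _ = (m : ℝ) - ((b : ℝ) - 1) / b * onePos b k m := (natCast_sub_mul_onePos (by omega) m).symm
    _ ≤ _ := by gcongr

noncomputable def discrepancy (b k n : ℕ) : ℝ :=
  ((onesCount b k n : ℝ) - ((b : ℝ) - 1) / b * n) / Real.logb b n

theorem logb_pos_of_two_le (hb : 1 < b) {n : ℕ} (hn : 2 ≤ n) : 0 < Real.logb b n :=
  Real.logb_pos (Nat.one_lt_cast.2 hb) (by exact_mod_cast hn)

theorem discrepancy_le (hb : 1 < b) (hk : k < b) {n : ℕ} (hn : 2 ≤ n) :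
    discrepancy b k n
      ≤ (((b : ℝ) - 1 - k) * (Real.logb b n + 1) + 1) / (b * Real.logb b n) := by
  rw [discrepancy, ← div_div]
  exact div_le_div_of_nonneg_right (onesCount_sub_le hb hk (by omega : n ≠ 0))
    (logb_pos_of_two_le hb hn).le

theorem le_discrepancy (hb : 1 < b) (hk : k < b) {n : ℕ} (hn : 2 ≤ n) :
    -((k - 1 : ℕ) : ℝ) * (Real.logb b n + 1) / (b * Real.logb b n) ≤ discrepancy b k n := by
  rw [discrepancy, ← div_div]
  exact div_le_div_of_nonneg_right (le_onesCount_sub hb hk n) (logb_pos_of_two_le hb hn).le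

theorem tendsto_affine_div_logb (hb : 1 < b) (c d : ℝ) :
    Tendsto (fun n : ℕ => (c * (Real.logb b n + 1) + d) / (b * Real.logb b n)) atTop
      (𝓝 (c / b)) := by
  have hlog : Tendsto (fun n : ℕ => Real.logb b n) atTop atTop :=
    (Real.tendsto_logb_atTop (Nat.one_lt_cast.2 hb)).comp tendsto_natCast_atTop_atTop
  have hlim : Tendsto (fun x : ℝ => c / b + (c + d) / b * x⁻¹) atTop (𝓝 (c / b)) := by
    simpa using tendsto_const_nhds.add (tendsto_inv_atTop_zero.const_mul ((c + d) / b))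
  refine (hlim.comp hlog).congr' ?_
  filter_upwards [hlog.eventually_gt_atTop 0] with n hn
  have : (b : ℝ) ≠ 0 := by positivity
  simp only [Function.comp_apply]
  field_simp
  ring

theorem discrepancy_onePos (hb : b ≠ 0) (m : ℕ) :
    discrepancy b k (onePos b k m) = defect b k m / (b * Real.logb b (onePos b k m)) := by
  rw [discrepancy, onesCount_onePos, natCast_sub_mul_onePos hb, div_div]

theorem logb_onePos_le (hb : 1 < b) (hk : k < b) {m : ℕ} (hm : m ≠ 0) :
    Real.logb b (onePos b k m) ≤ Nat.log b m + 2 := by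
  have hlog : Nat.log b (onePos b k m) ≤ Nat.log b m + 1 := by
    rw [← Nat.log_mul_base hb hm]
    exact Nat.log_mono_right ((onePos_le hb hk m).trans (by rw [mul_comm]; gcongr; omega))
  have hlog' : (Nat.log b (onePos b k m) : ℝ) ≤ Nat.log b m + 1 := by exact_mod_cast hlog
  linarith [logb_lt_natLog_add_one b (onePos b k m)]

theorem tendsto_onePos_ofDigits (hb : 1 < b) (r : ℕ) :
    Tendsto (fun J => onePos b k (Nat.ofDigits b (List.replicate J r ++ [1]))) atTop atTop :=
  tendsto_atTop_mono (fun J => (Nat.lt_pow_self hb).le.trans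
    ((le_ofDigits_replicate_append_one r J).trans (Nat.le_add_right _ _))) tendsto_id

theorem tendsto_discrepancy_onePos (hb : 1 < b) (hk : k < b) {m : ℕ → ℕ} {g c : ℤ}
    (hm : ∀ J, m J ≠ 0) (hlog : ∀ J, Nat.log b (m J) = J)
    (hD : ∀ J, defect b k (m J) = J * g + c) :
    Tendsto (fun J => discrepancy b k (onePos b k (m J))) atTop (𝓝 (g / b)) := by
  set x : ℕ → ℝ := fun J => Real.logb b (onePos b k (m J))
  have hx : ∀ J : ℕ, (J : ℝ) ≤ x J ∧ x J ≤ J + 2 := fun J => by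
    have hlow := natLog_le_logb_of_le (b := b) (Nat.le_add_right (m J) (blockSum b k (m J)))
    have hup := logb_onePos_le hb hk (hm J)
    rw [hlog J] at hlow hup
    exact ⟨hlow, hup⟩
  have hratio : Tendsto (fun J : ℕ => (J : ℝ) / x J) atTop (𝓝 1) := by
    refine tendsto_of_tendsto_of_tendsto_of_le_of_le'
      (by simpa using tendsto_natCast_div_add_atTop (2 : ℝ)) tendsto_const_nhds ?_ ?_
    all_goals filter_upwards [eventually_ge_atTop 1] with J hJ
    all_goals have hJ : (1 : ℝ) ≤ J := by exact_mod_cast hJ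
    · exact div_le_div_of_nonneg_left (by positivity) (by linarith [hx J]) (hx J).2
    · exact div_le_one_of_le₀ (hx J).1 (by linarith [hx J])
  have hlim : Tendsto (fun J : ℕ => (g + c / J : ℝ) * (J / x J) / b) atTop (𝓝 (g / b)) := by
    simpa using ((tendsto_const_nhds.add (tendsto_const_div_atTop_nhds_zero_nat _)).mul
      hratio).div_const (b : ℝ)
  refine hlim.congr' ?_
  filter_upwards [eventually_ge_atTop 1] with J hJ
  have hJ : (1 : ℝ) ≤ J := by exact_mod_cast hJ
  have hxJ : 0 < x J := by linarith [hx J]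
  rw [discrepancy_onePos (by omega), hD]
  change _ = ((J * g + c : ℤ) : ℝ) / (b * x J)
  push_cast
  field_simp

theorem tendsto_discrepancy_onePos_ofDigits (hb : 1 < b) (hk : k < b) {r : ℕ} (hr : r < b) :
    Tendsto (fun J => discrepancy b k (onePos b k (Nat.ofDigits b (List.replicate J r ++ [1]))))
      atTop (𝓝 (digitWeight b k r / b)) :=
  tendsto_discrepancy_onePos hb hk
    (fun J => (Nat.pos_of_ne_zero (pow_ne_zero J (by omega))).trans_le
      (le_ofDigits_replicate_append_one r J) |>.ne')
    (log_ofDigits_replicate_append_one hb hr) (defect_ofDigits_replicate_append_one hb hk hr)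

theorem limsup_discrepancy (hb : 1 < b) (hk : k < b) :
    limsup (discrepancy b k) atTop = ((b : ℝ) - 1 - k) / b := by
  refine limsup_eq_of_eventually_le_of_tendsto_comp
    (tendsto_onePos_ofDigits (k := k) hb (b - 1 - k))
    (eventually_atTop.2 ⟨2, fun n hn => discrepancy_le hb hk hn⟩)
    (tendsto_affine_div_logb hb _ 1) ?_
  simpa [digitWeight_sub_one_sub hk] using
    tendsto_discrepancy_onePos_ofDigits hb hk (r := b - 1 - k) (by omega)

theorem liminf_discrepancy (hb : 1 < b) (hk : k < b) :
    liminf (discrepancy b k) atTop = -((k - 1 : ℕ) : ℝ) / b := by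
  refine liminf_eq_of_eventually_ge_of_tendsto_comp
    (tendsto_onePos_ofDigits (k := k) hb ((b - k) % b))
    (eventually_atTop.2 ⟨2, fun n hn => le_discrepancy hb hk hn⟩)
    (by simpa using tendsto_affine_div_logb hb (-((k - 1 : ℕ) : ℝ)) 0) ?_
  simpa [digitWeight_sub_mod hk] using
    tendsto_discrepancy_onePos_ofDigits hb hk (Nat.mod_lt (b - k) (by omega : 0 < b))

end EscapeSequence

/-- For `b ≥ 2` and `0 ≤ k < b`, letting `E_n` be the number of ones among the first
`n` entries of the escape sequence `e(𝕋_b, k)`, `ρ = (b-1)/b`, and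
`Δ_n = (E_n - ρ n)/log_b n`, we have `liminf Δ_n = 0` if `k = 0`,
`liminf Δ_n = -(k-1)/b` if `k > 0`, and `limsup Δ_n = (b-k-1)/b`. -/
theorem regular_tree_discrepancy (b k : ℕ) (hb : 2 ≤ b) (hk : k < b) :
    (Filter.liminf
        (fun n : ℕ =>
          (((∑ i ∈ Finset.range n, explicitSeq b k i : ℕ) : ℝ)
              - ((b : ℝ) - 1) / b * n) / (Real.log n / Real.log b))
        Filter.atTop
      = if k = 0 then 0 else -(((k : ℝ) - 1) / b)) ∧
    (Filter.limsup
        (fun n : ℕ =>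
          (((∑ i ∈ Finset.range n, explicitSeq b k i : ℕ) : ℝ)
              - ((b : ℝ) - 1) / b * n) / (Real.log n / Real.log b))
        Filter.atTop
      = ((b : ℝ) - k - 1) / b) := by
  change Filter.liminf (EscapeSequence.discrepancy b k) Filter.atTop = _ ∧
    Filter.limsup (EscapeSequence.discrepancy b k) Filter.atTop = _
  rw [EscapeSequence.liminf_discrepancy hb hk, EscapeSequence.limsup_discrepancy hb hk]
  refine ⟨?_, by ring⟩
  rcases Nat.eq_zero_or_pos k with rfl | hk0
  · simp
  · rw [if_neg hk0.ne', Nat.cast_sub hk0, Nat.cast_one, neg_div]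
end

section
/- Define the sequence s_i by s_1 = 1 and s_{i+1} = s_i + 1 for the 2-brush case (since E^1_n = 1 for all n ≥ 1), so s_i = i. Then the 2-brush escape count satisfies E^2_{i(i+1)/2} = i for all i ≥ 1, where E^2 is the unique increasing function ℕ → ℕ with E^2_0 = 0 satisfying the fixed point recursion E^2_{E^2_n + 1 + n} = E^2_n + 1 for all n ≥ 1 and E^2_1 = 1. -/
/-- The 2-brush escape count: if `E : ℕ → ℕ` is increasing with `E 0 = 0`, `E 1 = 1`,
and satisfies the fixed point recursion `E (n + E n + 1) = E n + 1` for all `n ≥ 1`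
(the explosion-formula recursion for the 2-brush, where the 1-brush contributes
`f(n) = 1` escapes), then `E (i(i+1)/2) = i` for all `i ≥ 1`. -/
theorem two_brush_escape_count (E : ℕ → ℕ) (hmono : Monotone E)
    (h0 : E 0 = 0) (h1 : E 1 = 1)
    (hrec : ∀ n ≥ 1, E (n + E n + 1) = E n + 1) :
    ∀ i ≥ 1, E (i * (i + 1) / 2) = i := by
  intro i hi
  induction i with
  | zero => omega
  | succ j ih =>
    rcases Nat.lt_or_ge 1 (j+1) with h | h
    case _ =>
      have hj : j ≥ 1 := by omega
      have ihj := ih hj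
      obtain ⟨k, hk⟩ : 2 ∣ j * (j + 1) := (Nat.even_mul_succ_self j).two_dvd
      have hkk : j * (j + 1) / 2 = k := by omega
      have harith : (j + 1) * (j + 1 + 1) / 2 = k + j + 1 := by
        have h2 : (j + 1) * (j + 1 + 1) = j * (j + 1) + 2 * (j + 1) := by ring
        omega
      have hn1 : j * (j + 1) / 2 ≥ 1 := by
        have : j * (j + 1) ≥ 2 := by nlinarith
        omega
      have := hrec _ hn1
      rw [ihj] at this
      rw [harith, hkk] at *
      exact this
    case _ =>
      have hj0 : j = 0 := by omega
      subst hj0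
      simpa using h1
end

section
/- Suppose (X_n) is an increasing sequence of random variables with X_2 ≥ 2 such that conditionally on X_1,...,X_n, the event {X_{n+1} > X_n²} has probability at least c_3 > 0. Then there exists c_4 > 0 such that P(X_n ≥ 2^{2^{c_4 n}}) → 1 as n → ∞. -/
/-!
A step with `X (k + 1) > X k ^ 2` squares the process, so `X n ≥ 2 ^ 2 ^ N n`, where `N n` counts
such steps in `[2, n)`. The indicators of these steps minus their conditional probabilities form a
martingale difference sequence bounded by `1`; its increments are orthogonal in `L²`, so the sum
over `[2, n)` has second moment at most `n - 2`, and by Chebyshev `N n ≥ c₃ (n - 2) / 2` except on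
an event of probability `O(1 / n)`. Hence `c₄ = c₃ / 4` works.
-/

open MeasureTheory Filter Finset

def numSquarings (x : ℕ → ℕ) (a n : ℕ) : ℕ := #{k ∈ Ico a n | x k ^ 2 < x (k + 1)}

theorem numSquarings_succ (x : ℕ → ℕ) {a n : ℕ} (han : a ≤ n) :
    numSquarings x a (n + 1) =
      numSquarings x a n + if x n ^ 2 < x (n + 1) then 1 else 0 := by
  simp only [numSquarings, card_filter, sum_Ico_succ_top han]

theorem pow_two_pow_numSquarings_le {x : ℕ → ℕ} (hx : Monotone x) {a n : ℕ} (han : a ≤ n) :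
    x a ^ 2 ^ numSquarings x a n ≤ x n := by
  induction n, han using Nat.le_induction with
  | base => simp [numSquarings]
  | succ n han ih =>
    rw [numSquarings_succ x han]
    split_ifs with hsq
    · calc x a ^ 2 ^ (numSquarings x a n + 1) = (x a ^ 2 ^ numSquarings x a n) ^ 2 := by
            rw [pow_succ, pow_mul]
        _ ≤ x n ^ 2 := Nat.pow_le_pow_left ih 2
        _ ≤ x (n + 1) := hsq.le
    · exact ih.trans (hx n.le_succ)

theorem two_rpow_two_rpow_le {x : ℕ → ℕ} (hx : Monotone x) {a n : ℕ} (han : a ≤ n)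
    (hxa : 2 ≤ x a) {y : ℝ} (hy : y ≤ numSquarings x a n) :
    (2 : ℝ) ^ (2 : ℝ) ^ y ≤ x n := by
  have hpow : 2 ^ 2 ^ numSquarings x a n ≤ x n :=
    (Nat.pow_le_pow_left hxa _).trans (pow_two_pow_numSquarings_le hx han)
  calc (2 : ℝ) ^ (2 : ℝ) ^ y ≤ (2 : ℝ) ^ (2 : ℝ) ^ (numSquarings x a n : ℝ) := by
        gcongr <;> norm_num
    _ = ((2 ^ 2 ^ numSquarings x a n : ℕ) : ℝ) := by norm_cast
    _ ≤ x n := by exact_mod_cast hpow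

theorem MeasureTheory.integral_mul_eq_zero_of_condExp_eq_zero {Ω : Type*}
    {m m0 : MeasurableSpace Ω} {μ : Measure Ω} [IsFiniteMeasure μ] (hm : m ≤ m0)
    {f g : Ω → ℝ} (hf : StronglyMeasurable[m] f) (hfg : Integrable (f * g) μ)
    (hg : Integrable g μ) (hg0 : μ[g | m] =ᵐ[μ] 0) :
    ∫ ω, f ω * g ω ∂μ = 0 := by
  have hpull : μ[f * g | m] =ᵐ[μ] 0 := by
    filter_upwards [condExp_mul_of_stronglyMeasurable_left hf hfg hg, hg0] with ω h h0
    simp [h, h0]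
  calc ∫ ω, f ω * g ω ∂μ = ∫ ω, (μ[f * g | m]) ω ∂μ := (integral_condExp hm).symm
    _ = 0 := by simp [integral_congr_ae hpull]

section MartingaleDiff

variable {Ω : Type*} {m0 : MeasurableSpace Ω}

structure IsBddMartingaleDiff (d : ℕ → Ω → ℝ) (𝔽 : Filtration ℕ m0) (μ : Measure Ω) (C : ℝ) :
    Prop where
  stronglyMeasurable : ∀ k, StronglyMeasurable[𝔽 (k + 1)] (d k)
  abs_le : ∀ k, ∀ᵐ ω ∂μ, |d k ω| ≤ C
  condExp_eq_zero : ∀ k, μ[d k | 𝔽 k] =ᵐ[μ] 0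

namespace IsBddMartingaleDiff

variable {μ : Measure Ω} {𝔽 : Filtration ℕ m0} {d : ℕ → Ω → ℝ} {C : ℝ}

theorem aestronglyMeasurable (h : IsBddMartingaleDiff d 𝔽 μ C) (k : ℕ) :
    AEStronglyMeasurable (d k) μ :=
  ((h.stronglyMeasurable k).mono (𝔽.le _)).aestronglyMeasurable

theorem memLp [IsFiniteMeasure μ] (h : IsBddMartingaleDiff d 𝔽 μ C) (k : ℕ) (p : ENNReal) :
    MemLp (d k) p μ :=
  .of_bound (h.aestronglyMeasurable k) C (h.abs_le k)

theorem integral_mul_eq_zero [IsFiniteMeasure μ] (h : IsBddMartingaleDiff d 𝔽 μ C) {j k : ℕ}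
    (hjk : j < k) : ∫ ω, d j ω * d k ω ∂μ = 0 :=
  integral_mul_eq_zero_of_condExp_eq_zero (𝔽.le k) ((h.stronglyMeasurable j).mono (𝔽.mono hjk))
    ((h.memLp j 2).integrable_mul (h.memLp k 2)) ((h.memLp k 1).integrable le_rfl)
    (h.condExp_eq_zero k)

theorem integral_sq_le [IsProbabilityMeasure μ] (h : IsBddMartingaleDiff d 𝔽 μ C) (k : ℕ) :
    ∫ ω, d k ω ^ 2 ∂μ ≤ C ^ 2 := by
  have hC : ∀ᵐ ω ∂μ, d k ω ^ 2 ≤ C ^ 2 := by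
    filter_upwards [h.abs_le k] with ω hω
    exact sq_le_sq.2 (hω.trans (le_abs_self C))
  simpa using integral_mono_ae (h.memLp k 2).integrable_sq (integrable_const (C ^ 2)) hC

theorem integral_sum_sq_le [IsProbabilityMeasure μ] (h : IsBddMartingaleDiff d 𝔽 μ C)
    (s : Finset ℕ) :
    ∫ ω, (∑ k ∈ s, d k ω) ^ 2 ∂μ ≤ C ^ 2 * #s := by
  have hint : ∀ j k, Integrable (fun ω => d j ω * d k ω) μ :=
    fun j k => (h.memLp j 2).integrable_mul (h.memLp k 2)
  have horth : ∀ j k, j ≠ k → ∫ ω, d j ω * d k ω ∂μ = 0 := by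
    intro j k hjk
    rcases hjk.lt_or_gt with hlt | hgt
    · exact h.integral_mul_eq_zero hlt
    · simpa only [mul_comm] using h.integral_mul_eq_zero hgt
  calc ∫ ω, (∑ k ∈ s, d k ω) ^ 2 ∂μ
      = ∑ j ∈ s, ∑ k ∈ s, ∫ ω, d j ω * d k ω ∂μ := by
        simp_rw [sq, sum_mul_sum]
        rw [integral_finsetSum _ fun j _ => integrable_finsetSum _ fun k _ => hint j k]
        exact sum_congr rfl fun j _ => integral_finsetSum _ fun k _ => hint j k
    _ = ∑ k ∈ s, ∫ ω, d k ω ^ 2 ∂μ := by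
        refine sum_congr rfl fun j hj => ?_
        rw [sum_eq_single_of_mem j hj fun k _ hkj => horth j k hkj.symm]
        simp_rw [sq]
    _ ≤ C ^ 2 * #s := by
        simpa [mul_comm] using sum_le_sum fun k (_ : k ∈ s) => h.integral_sq_le k

theorem measureReal_le_abs_sum_le [IsProbabilityMeasure μ]
    (h : IsBddMartingaleDiff d 𝔽 μ C) (s : Finset ℕ) {t : ℝ} (ht : 0 < t) :
    μ.real {ω | t ≤ |∑ k ∈ s, d k ω|} ≤ C ^ 2 * #s / t ^ 2 := by
  have hsq : Integrable (fun ω => (∑ k ∈ s, d k ω) ^ 2) μ :=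
    (memLp_finsetSum s fun k _ => h.memLp k 2).integrable_sq
  have hset : {ω | t ≤ |∑ k ∈ s, d k ω|} = {ω | t ^ 2 ≤ (∑ k ∈ s, d k ω) ^ 2} := by
    ext ω
    rw [Set.mem_ofPred_eq, Set.mem_ofPred_eq, ← sq_abs (∑ k ∈ s, d k ω),
      pow_le_pow_iff_left₀ ht.le (abs_nonneg _) two_ne_zero]
  rw [hset, le_div_iff₀ (by positivity), mul_comm]
  exact (mul_meas_ge_le_integral_of_nonneg (.of_forall fun ω => sq_nonneg _) hsq _).trans
    (h.integral_sum_sq_le s)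

end IsBddMartingaleDiff

end MartingaleDiff

section IndicatorCount

variable {Ω : Type*} {m m0 : MeasurableSpace Ω} {μ : Measure Ω}

theorem MeasureTheory.ae_condExp_indicator_one_mem_Icc [IsFiniteMeasure μ] (hm : m ≤ m0)
    {A : Set Ω} (hA : MeasurableSet A) :
    ∀ᵐ ω ∂μ, μ[A.indicator (1 : Ω → ℝ) | m] ω ∈ Set.Icc 0 1 := by
  have hle : μ[A.indicator (1 : Ω → ℝ) | m] ≤ᵐ[μ] μ[fun _ => (1 : ℝ) | m] :=
    condExp_mono ((integrable_const 1).indicator hA) (integrable_const 1)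
      (.of_forall (Set.indicator_le_self' fun _ _ => zero_le_one))
  have h0 : 0 ≤ᵐ[μ] μ[A.indicator (1 : Ω → ℝ) | m] :=
    condExp_nonneg (.of_forall (Set.indicator_nonneg fun _ _ => zero_le_one))
  filter_upwards [h0, hle] with ω h0 h1
  exact ⟨h0, by simpa [condExp_const hm] using h1⟩

theorem MeasureTheory.condExp_sub_condExp_self [IsFiniteMeasure μ] (hm : m ≤ m0) {f : Ω → ℝ}
    (hf : Integrable f μ) : μ[f - μ[f | m] | m] =ᵐ[μ] 0 := by
  have hidem : μ[μ[f | m] | m] = μ[f | m] :=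
    condExp_of_stronglyMeasurable hm stronglyMeasurable_condExp integrable_condExp
  filter_upwards [condExp_sub hf (integrable_condExp (m := m) (f := f)) m] with ω hω
  simp [hω, hidem]

theorem isBddMartingaleDiff_indicator_sub_condExp [IsFiniteMeasure μ] {𝔽 : Filtration ℕ m0}
    {A : ℕ → Set Ω} (hA : ∀ k, MeasurableSet[𝔽 (k + 1)] (A k)) :
    IsBddMartingaleDiff
      (fun k => (A k).indicator (1 : Ω → ℝ) - μ[(A k).indicator 1 | 𝔽 k]) 𝔽 μ 1 where
  stronglyMeasurable k := (stronglyMeasurable_const.indicator (hA k)).sub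
    (stronglyMeasurable_condExp.mono (𝔽.mono k.le_succ))
  abs_le k := by
    filter_upwards [ae_condExp_indicator_one_mem_Icc (𝔽.le k) (𝔽.le _ _ (hA k))] with ω hω
    have h01 : (A k).indicator (1 : Ω → ℝ) ω ∈ Set.Icc 0 1 := by
      by_cases hω' : ω ∈ A k <;> simp [hω']
    simp only [Pi.sub_apply, abs_le]
    constructor <;> linarith [hω.1, hω.2, h01.1, h01.2]
  condExp_eq_zero k :=
    condExp_sub_condExp_self (𝔽.le k) ((integrable_const 1).indicator (𝔽.le _ _ (hA k)))

theorem measureReal_sum_indicator_lt_le [IsProbabilityMeasure μ] {𝔽 : Filtration ℕ m0}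
    {A : ℕ → Set Ω} (hA : ∀ k, MeasurableSet[𝔽 (k + 1)] (A k)) {c : ℝ} (hc : 0 < c)
    {s : Finset ℕ} (hcond : ∀ k ∈ s, ∀ᵐ ω ∂μ, c ≤ μ[(A k).indicator (1 : Ω → ℝ) | 𝔽 k] ω) :
    μ.real {ω | ∑ k ∈ s, (A k).indicator (1 : Ω → ℝ) ω < c * #s / 2} ≤ 4 / (c ^ 2 * #s) := by
  rcases s.eq_empty_or_nonempty with rfl | hs
  · simp
  set t := c * #s / 2 with ht_def
  have ht : 0 < t := by positivity
  set d := fun k => (A k).indicator (1 : Ω → ℝ) - μ[(A k).indicator 1 | 𝔽 k]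
  have hbad : {ω | ∑ k ∈ s, (A k).indicator (1 : Ω → ℝ) ω < t} ≤ᵐ[μ]
      {ω | t ≤ |∑ k ∈ s, d k ω|} := by
    filter_upwards [(eventually_all_finset s).2 hcond] with ω hω (hlt : _ < t)
    have hsum : c * #s ≤ ∑ k ∈ s, μ[(A k).indicator (1 : Ω → ℝ) | 𝔽 k] ω := by
      simpa [mul_comm] using sum_le_sum hω
    change t ≤ _
    simp only [d, Pi.sub_apply, sum_sub_distrib]
    rw [abs_sub_comm]
    exact le_abs.2 (Or.inl (by linarith [ht_def]))
  calc μ.real {ω | ∑ k ∈ s, (A k).indicator (1 : Ω → ℝ) ω < t}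
      ≤ μ.real {ω | t ≤ |∑ k ∈ s, d k ω|} :=
        ENNReal.toReal_mono (measure_ne_top _ _) (measure_mono_ae hbad)
    _ ≤ 1 ^ 2 * #s / t ^ 2 :=
        (isBddMartingaleDiff_indicator_sub_condExp hA).measureReal_le_abs_sum_le s ht
    _ = 4 / (c ^ 2 * #s) := by
        have : (0 : ℝ) < #s := by exact_mod_cast hs.card_pos
        field_simp
        ring

end IndicatorCount

theorem tendsto_measureReal_nhds_one {Ω ι : Type*} {m0 : MeasurableSpace Ω} {μ : Measure Ω}
    [IsProbabilityMeasure μ] {l : Filter ι} {E : ι → Set Ω} {b : ι → ℝ} (hb : Tendsto b l (nhds 0))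
    (hE : ∀ᶠ n in l, μ.real (E n)ᶜ ≤ b n) :
    Tendsto (fun n => μ.real (E n)) l (nhds 1) := by
  have hlow : ∀ n, 1 - μ.real (E n)ᶜ ≤ μ.real (E n) := fun n => by
    have := measureReal_union_le (μ := μ) (E n) (E n)ᶜ
    rw [Set.union_compl_self, probReal_univ] at this
    linarith
  refine tendsto_of_tendsto_of_tendsto_of_le_of_le' (by simpa using hb.const_sub 1)
    tendsto_const_nhds ?_ (.of_forall fun n => measureReal_le_one)
  filter_upwards [hE] with n hn
  linarith [hlow n]

/-- Doubly exponential growth: if `(Xₙ)` is a strictly increasing adapted sequence of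
positive integers with `X₂ ≥ 2`, and conditionally on the past the event
`{X_{n+1} > Xₙ²}` has probability at least `c₃ > 0`, then there is `c₄ > 0` such that
`P(Xₙ ≥ 2^{2^{c₄ n}}) → 1` as `n → ∞`. -/
theorem doubly_exponential_growth {Ω : Type*} {m0 : MeasurableSpace Ω}
    (μ : Measure Ω) [IsProbabilityMeasure μ]
    (𝔽 : Filtration ℕ m0) (X : ℕ → Ω → ℕ)
    (hadapted : Adapted 𝔽 X)
    (hincr : ∀ n ω, X n ω + 1 ≤ X (n + 1) ω)
    (h2 : ∀ ω, 2 ≤ X 2 ω)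
    (c₃ : ℝ) (hc₃ : 0 < c₃)
    (hcond : ∀ n ≥ 2, ∀ᵐ ω ∂μ,
      c₃ ≤ (μ[(fun ω' => if (X n ω') ^ 2 < X (n + 1) ω' then (1 : ℝ) else 0) | 𝔽 n]) ω) :
    ∃ c₄ : ℝ, 0 < c₄ ∧
      Tendsto (fun n : ℕ =>
          (μ {ω | (2 : ℝ) ^ ((2 : ℝ) ^ (c₄ * n)) ≤ (X n ω : ℝ)}).toReal)
        atTop (nhds 1) := by
  set A : ℕ → Set Ω := fun k => {ω | X k ω ^ 2 < X (k + 1) ω}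
  have hA : ∀ k, MeasurableSet[𝔽 (k + 1)] (A k) := fun k =>
    measurableSet_lt (((hadapted k).mono (𝔽.mono k.le_succ) le_rfl).pow_const 2)
      (hadapted (k + 1))
  have hcondA : ∀ k ≥ 2, ∀ᵐ ω ∂μ, c₃ ≤ μ[(A k).indicator (1 : Ω → ℝ) | 𝔽 k] ω := by
    intro k hk
    convert hcond k hk using 6
    simp [A, Set.indicator_apply]
  have hmono : ∀ ω, Monotone (X · ω) := fun ω =>
    monotone_nat_of_le_succ fun k => (X k ω).le_succ.trans (hincr k ω)
  have hcount : ∀ n ω,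
      (numSquarings (X · ω) 2 n : ℝ) = ∑ k ∈ Ico 2 n, (A k).indicator 1 ω := fun n ω => by
    simp [numSquarings, A, Set.indicator_apply, sum_boole]
  refine ⟨c₃ / 4, by positivity,
    tendsto_measureReal_nhds_one (b := fun n => 4 / (c₃ ^ 2 * (n - 2 : ℕ))) ?_ ?_⟩
  · exact tendsto_const_nhds.div_atTop <| (tendsto_natCast_atTop_atTop.comp
      (tendsto_sub_atTop_nat 2)).const_mul_atTop (by positivity)
  filter_upwards [eventually_ge_atTop 4] with n hn
  have hbad := measureReal_sum_indicator_lt_le hA hc₃ (s := Ico 2 n) fun k hk =>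
    hcondA k (mem_Ico.1 hk).1
  rw [Nat.card_Ico] at hbad
  refine (measureReal_mono fun ω hω => ?_).trans hbad
  by_contra hsmall
  refine hω (two_rpow_two_rpow_le (hmono ω) (by omega) (h2 ω) ?_)
  have hn' : (4 : ℝ) ≤ n := by exact_mod_cast hn
  have hlarge : c₃ * (n - 2) / 2 ≤ ∑ k ∈ Ico 2 n, (A k).indicator (1 : Ω → ℝ) ω := by
    simpa [Nat.cast_sub (show 2 ≤ n by omega)] using hsmall
  rw [hcount]
  nlinarith
end

section
/- Let T be a locally finite infinite tree rooted at ρ with ρ of degree 1, such that every non-root vertex has at least one child. For each non-root vertex v let q_v ∈ [0,1] and suppose the numbers satisfy q_v ≥ 1 - 1/(1 + Σ_{i=1}^{b(v)} q_{v^(i)}) where v^(1),...,v^(b(v)) are the children of v. Define f(v) = Π_{x ∈ (ρ, v]} (1 - q_x). Then f is sub-harmonic at every non-root vertex: Σ_{i=0}^{b(v)} f(v^(i)) ≥ (1 + b(v)) f(v), where v^(0) is the parent of v. -/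
open Finset

/-- Sub-harmonicity of the product function.  A locally finite infinite tree rooted
at `root` (of degree 1, every non-root vertex with at least one child) is encoded by
a `parent` map and finite `children` sets; `depth v` is the distance to the root, so
`parent^[i] v` for `i < depth v` runs over the vertices of the path `(root, v]`
(including `v`, excluding `root`).  Given `q_v ∈ [0,1]` with
`q_v ≥ 1 - 1/(1 + Σ_{w child of v} q_w)` for non-root `v`, the function
`f(v) = Π_{x ∈ (root,v]} (1 - q_x)` is sub-harmonic at every non-root vertex:
`f(parent v) + Σ_{w child of v} f(w) ≥ (1 + b(v)) f(v)`. -/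
theorem subharmonic_product (V : Type*) [DecidableEq V] [Infinite V]
    (root : V) (parent : V → V) (children : V → Finset V)
    (hchildren : ∀ u w : V, w ∈ children u ↔ parent w = u ∧ w ≠ root)
    (hparentroot : parent root = root)
    (depth : V → ℕ)
    (hdepth : ∀ v : V, parent^[depth v] v = root ∧ ∀ m < depth v, parent^[m] v ≠ root)
    (hrootdeg : (children root).card = 1)
    (hchild_nonempty : ∀ v : V, v ≠ root → (children v).Nonempty)
    (q : V → ℝ) (hq : ∀ v, q v ∈ Set.Icc (0 : ℝ) 1)
    (hrec : ∀ v : V, v ≠ root → 1 - 1 / (1 + ∑ w ∈ children v, q w) ≤ q v) :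
    ∀ v : V, v ≠ root →
      (1 + (children v).card : ℝ) *
          (∏ i ∈ Finset.range (depth v), (1 - q (parent^[i] v)))
        ≤ (∏ i ∈ Finset.range (depth (parent v)), (1 - q (parent^[i] (parent v))))
          + ∑ w ∈ children v,
              ∏ i ∈ Finset.range (depth w), (1 - q (parent^[i] w)) := by
  intro v hv
  -- depth is the unique minimal index hitting the root
  have hdu : ∀ (u : V) (k : ℕ), parent^[k] u = root →
      (∀ m < k, parent^[m] u ≠ root) → depth u = k := by
    intro u k hk hmin
    rcases lt_trichotomy (depth u) k with h | h | h
    · exact absurd (hdepth u).1 (hmin _ h)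
    · exact h
    · exact absurd hk ((hdepth u).2 _ h)
  have hpos : ∀ u : V, u ≠ root → 0 < depth u := by
    intro u hu
    rcases Nat.eq_zero_or_pos (depth u) with h | h
    · have := (hdepth u).1
      rw [h] at this
      exact absurd this hu
    · exact h
  have hdpar : ∀ u : V, u ≠ root → depth (parent u) = depth u - 1 := by
    intro u hu
    apply hdu
    · have hk : depth u - 1 + 1 = depth u := by have := hpos u hu; omega
      have h := (hdepth u).1
      rw [← hk, Function.iterate_succ_apply] at h
      exact h
    · intro m hm
      have := (hdepth u).2 (m + 1) (by omega)
      rwa [Function.iterate_succ_apply] at this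
  have hfnn : ∀ u : V, 0 ≤ ∏ i ∈ Finset.range (depth u), (1 - q (parent^[i] u)) := by
    intro u
    apply Finset.prod_nonneg
    intro i _
    have := (hq (parent^[i] u)).2
    linarith
  have hstep : ∀ u : V, u ≠ root →
      (∏ i ∈ Finset.range (depth u), (1 - q (parent^[i] u)))
        = (1 - q u) * ∏ i ∈ Finset.range (depth (parent u)), (1 - q (parent^[i] (parent u))) := by
    intro u hu
    obtain ⟨d, hd⟩ : ∃ d, depth u = d + 1 :=
      ⟨depth u - 1, (Nat.succ_pred_eq_of_pos (hpos u hu)).symm⟩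
    rw [hd, hdpar u hu, hd, Nat.add_sub_cancel, Finset.prod_range_succ']
    simp only [Function.iterate_succ_apply, Function.iterate_zero_apply]
    ring
  set F := ∏ i ∈ Finset.range (depth (parent v)), (1 - q (parent^[i] (parent v))) with hF
  set S := ∑ w ∈ children v, q w with hS
  have hSnn : 0 ≤ S := Finset.sum_nonneg fun w _ => (hq w).1
  have hfv : (∏ i ∈ Finset.range (depth v), (1 - q (parent^[i] v))) = (1 - q v) * F :=
    hstep v hv
  have hsum : ∑ w ∈ children v,
      (∏ i ∈ Finset.range (depth w), (1 - q (parent^[i] w)))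
      = ((children v).card - S) * ((1 - q v) * F) := by
    have : ∀ w ∈ children v,
        (∏ i ∈ Finset.range (depth w), (1 - q (parent^[i] w)))
          = (1 - q w) * ((1 - q v) * F) := by
      intro w hw
      obtain ⟨hpw, hwr⟩ := (hchildren v w).1 hw
      rw [hstep w hwr, hpw, hfv]
    rw [Finset.sum_congr rfl this, ← Finset.sum_mul, Finset.sum_sub_distrib,
      Finset.sum_const, nsmul_eq_mul, mul_one, ← hS]
  have hqv : (1 - q v) * (1 + S) ≤ 1 := by
    have h1 : (0:ℝ) < 1 + S := by linarith
    have h2 := hrec v hv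
    rw [← hS] at h2
    have h3 : 1 - q v ≤ 1 / (1 + S) := by linarith
    calc (1 - q v) * (1 + S) ≤ (1 / (1 + S)) * (1 + S) := by
          apply mul_le_mul_of_nonneg_right h3 (le_of_lt h1)
      _ = 1 := by field_simp
  have hFnn : 0 ≤ F := hfnn (parent v)
  rw [hfv, hsum]
  nlinarith [mul_le_mul_of_nonneg_right hqv hFnn, mul_nonneg (mul_nonneg (by linarith [(hq v).2] : (0:ℝ) ≤ 1 - q v) hSnn) hFnn]
end
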